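/- arXiv:1805.05094 — 7 statements merged into one kernel-verified Lean document; each statement's English description precedes it below -/
import Mathlib

section
/- Let ℓ ≤ τ ≤ k be positive integers and let X = ((x_1^1,x_1^2),…,(x_n^1,x_n^2)) be n pairs of nonnegative reals whose 2n entries are pairwise distinct. Let c = (c_1,…,c_n) be uniformly distributed on {1,2}^n; define the sample vector s by s_i = x_i^{c_i} and the award vector v by v_i = x_i^{3−c_i}. Let T be the τ-th largest value among s_1,…,s_n and let S be the set consisting of the first (in the order i = 1,…,n) at most k indices i with v_i > T. Then E_c[TOP_ℓ(S; v)] ≥ (1 − 4ℓ·e^{−(min(k−τ, τ−ℓ))²/(8k)}) · E_c[TOP_ℓ(v)]. -/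
open Finset

/-!
Let `P m = topSet (pairEntry X) m` be the set of the `m` largest of the `2n` entries. If at
least `ℓ` entries of `P (τ + ℓ - 1)` are awards, the threshold lies below all of
`P (τ + ℓ - 1)`, so at least `ℓ` awards beat it; if at least `τ` entries of `P (k + τ - 1)` are
samples, fewer than `k` awards beat it, so all of them are accepted. On these two events `ALG^τ`
loses nothing, by an exchange argument. Each event fails with probability at most
`exp (-min (k - τ) (τ - ℓ) ^ 2 / (8 k))` by a Chernoff bound for the number of samples in `P m`.
On failure the loss is at most the sum `Y` of the `ℓ` largest entries, and `E [TOP_ℓ(v)] ≥ Y / 2`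
because every entry is an award with probability `1 / 2`.
-/

/-- `TOPval ℓ A v` is the maximum of `∑ i ∈ B, v i` over `B ⊆ A` with `|B| ≤ ℓ`. -/
noncomputable def TOPval {n : ℕ} (ℓ : ℕ) (A : Finset (Fin n)) (v : Fin n → ℝ) : ℝ :=
  ((A.powerset.filter fun B => B.card ≤ ℓ).image fun B => ∑ i ∈ B, v i).max'
    (Finset.Nonempty.image
      ⟨∅, Finset.mem_filter.mpr ⟨Finset.empty_mem_powerset A, by simp⟩⟩ _)

/-- The `t`-th largest entry of `w` (1-indexed); `0` if out of range. -/
noncomputable def kthLargest {n : ℕ} (w : Fin n → ℝ) (t : ℕ) : ℝ :=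
  ((List.ofFn w).insertionSort (· ≥ ·)).getD (t - 1) 0

/-- The set of the first (at most) `k` indices `i` (in increasing order) with `v i > T`. -/
noncomputable def acceptSet {n : ℕ} (k : ℕ) (T : ℝ) (v : Fin n → ℝ) : Finset (Fin n) :=
  Finset.univ.filter fun i =>
    T < v i ∧ (Finset.univ.filter fun j => j < i ∧ T < v j).card < k

/-- The sample vector determined by the pairs `X` and the coin flips `c`. -/
def sampleVec {n : ℕ} (X : Fin n → ℝ × ℝ) (c : Fin n → Bool) (i : Fin n) : ℝ :=
  if c i then (X i).1 else (X i).2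

/-- The award vector determined by the pairs `X` and the coin flips `c`
(the entry of each pair not used as a sample). -/
def awardVec {n : ℕ} (X : Fin n → ℝ × ℝ) (c : Fin n → Bool) (i : Fin n) : ℝ :=
  if c i then (X i).2 else (X i).1

open Function

lemma Finset.sum_le_sum_of_card_eq_of_le {ι M : Type*} [AddCommMonoid M] [PartialOrder M]
    [IsOrderedAddMonoid M] {A B : Finset ι} {f g : ι → M} {m : M} (hcard : #A = #B)
    (hA : ∀ a ∈ A, f a ≤ m) (hB : ∀ b ∈ B, m ≤ g b) : ∑ a ∈ A, f a ≤ ∑ b ∈ B, g b :=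
  calc ∑ a ∈ A, f a ≤ #A • m := sum_le_card_nsmul _ _ _ hA
    _ = #B • m := by rw [hcard]
    _ ≤ ∑ b ∈ B, g b := card_nsmul_le_sum _ _ _ hB

section TOPval

variable {n ℓ : ℕ} {A : Finset (Fin n)} {v : Fin n → ℝ}

lemma le_TOPval {B : Finset (Fin n)} (hBA : B ⊆ A) (hB : #B ≤ ℓ) :
    ∑ i ∈ B, v i ≤ TOPval ℓ A v :=
  le_max' _ _ (mem_image_of_mem (fun B => ∑ i ∈ B, v i)
    (mem_filter.mpr ⟨mem_powerset.mpr hBA, hB⟩))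

lemma TOPval_nonneg : 0 ≤ TOPval ℓ A v := by
  simpa using le_TOPval (v := v) (empty_subset A) (Nat.zero_le ℓ)

lemma TOPval_le {M : ℝ} (h : ∀ B ⊆ A, #B ≤ ℓ → ∑ i ∈ B, v i ≤ M) : TOPval ℓ A v ≤ M := by
  refine max'_le _ _ _ fun y hy => ?_
  obtain ⟨B, hB, rfl⟩ := mem_image.mp hy
  exact h B (mem_powerset.mp (mem_filter.mp hB).1) (mem_filter.mp hB).2

lemma TOPval_univ_le_TOPval_filter_pos : TOPval ℓ univ v ≤ TOPval ℓ {i | 0 < v i} v := by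
  refine TOPval_le fun B _ hB => ?_
  rw [← sum_filter_add_sum_filter_not B (fun i => 0 < v i)]
  have hneg : ∑ i ∈ B with ¬0 < v i, v i ≤ 0 :=
    sum_nonpos fun i hi => not_lt.mp (mem_filter.mp hi).2
  have hpos := le_TOPval (v := v) (filter_subset_filter (fun i => 0 < v i) (subset_univ B))
    ((card_filter_le _ _).trans hB)
  linarith

/-- Exchange argument: entries at most `T` of a candidate set are traded for unused entries
above `T`. -/
lemma TOPval_univ_le_TOPval_filter_lt {T : ℝ} (hS : ℓ ≤ #{i | T < v i}) :
    TOPval ℓ univ v ≤ TOPval ℓ {i | T < v i} v := by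
  set S : Finset (Fin n) := {i | T < v i}
  refine TOPval_le fun B _ hB => ?_
  have hcard : #(B \ S) ≤ #(S \ B) := by
    have h1 := card_sdiff_add_card_inter B S
    have h2 := card_sdiff_add_card_inter S B
    rw [inter_comm] at h2
    omega
  obtain ⟨D, hDsub, hDcard⟩ := exists_subset_card_eq hcard
  have hexch : ∑ i ∈ B \ S, v i ≤ ∑ i ∈ D, v i :=
    sum_le_sum_of_card_eq_of_le hDcard.symm
      (fun i hi => by simpa [S] using (mem_sdiff.mp hi).2)
      (fun i hi => (mem_filter.mp (mem_sdiff.mp (hDsub hi)).1).2.le)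
  have hdisj : Disjoint (B ∩ S) D :=
    disjoint_left.mpr fun i hi hiD => (mem_sdiff.mp (hDsub hiD)).2 (mem_inter.mp hi).1
  calc ∑ i ∈ B, v i = ∑ i ∈ B ∩ S, v i + ∑ i ∈ B \ S, v i := (sum_inter_add_sum_sdiff B S v).symm
    _ ≤ ∑ i ∈ B ∩ S, v i + ∑ i ∈ D, v i := by gcongr
    _ = ∑ i ∈ B ∩ S ∪ D, v i := (sum_union hdisj).symm
    _ ≤ TOPval ℓ S v := le_TOPval
        (union_subset inter_subset_right (hDsub.trans sdiff_subset))
        (by rw [card_union_of_disjoint hdisj, hDcard, card_inter_add_card_sdiff]; exact hB)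

lemma acceptSet_eq_filter {k : ℕ} {T : ℝ} (hk : #{i | T < v i} < k) :
    acceptSet k T v = ({i | T < v i} : Finset (Fin n)) := by
  refine filter_congr fun i _ => and_iff_left_of_imp fun _ => ?_
  refine lt_of_le_of_lt (card_le_card fun j hj => ?_) hk
  simp only [mem_filter, mem_univ, true_and] at hj ⊢
  exact hj.2

lemma TOPval_univ_le_TOPval_acceptSet_zero {k : ℕ} (hnk : n < k) :
    TOPval ℓ univ v ≤ TOPval ℓ (acceptSet k 0 v) v := by
  rw [acceptSet_eq_filter ((card_le_univ _).trans_lt (by simpa using hnk))]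
  exact TOPval_univ_le_TOPval_filter_pos

end TOPval

section kthLargest

lemma List.countP_getElem_lt_le_of_pairwise_ge {α : Type*} [LinearOrder α] {L : List α}
    (hL : L.Pairwise (· ≥ ·)) {i : ℕ} (hi : i < L.length) :
    L.countP (fun x => L[i] < x) ≤ i := by
  induction L generalizing i with
  | nil => simp at hi
  | cons a L ih =>
    rw [List.pairwise_cons] at hL
    cases i with
    | zero =>
      refine (List.countP_eq_zero.mpr fun x hx => ?_).le
      rcases List.mem_cons.mp hx with rfl | hx
      · simp
      · simpa using hL.1 x hx
    | succ i =>
      have := ih hL.2 (Nat.lt_of_succ_lt_succ hi)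
      rw [List.countP_cons]
      simp only [List.getElem_cons_succ]
      split <;> omega

lemma List.lt_countP_getElem_le_of_pairwise_ge {α : Type*} [LinearOrder α] {L : List α}
    (hL : L.Pairwise (· ≥ ·)) {i : ℕ} (hi : i < L.length) :
    i < L.countP (fun x => L[i] ≤ x) := by
  induction L generalizing i with
  | nil => simp at hi
  | cons a L ih =>
    rw [List.pairwise_cons] at hL
    rw [List.countP_cons]
    cases i with
    | zero => simp
    | succ i =>
      have hi : i < L.length := Nat.lt_of_succ_lt_succ hi
      have := ih hL.2 hi
      simp only [List.getElem_cons_succ]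
      have : L[i] ≤ a := hL.1 _ (List.getElem_mem hi)
      simp only [this, decide_true, if_true]
      omega

lemma card_filter_univ_eq_countP_ofFn {α : Type*} {n : ℕ} (s : Fin n → α) (p : α → Prop)
    [DecidablePred p] : #{j | p (s j)} = (List.ofFn s).countP p := by
  rw [← Multiset.coe_countP, ← Fin.univ_val_map, Multiset.countP_map]
  rfl

variable {n t : ℕ} {s : Fin n → ℝ}

lemma exists_sorted_kthLargest_eq_getElem (ht : 0 < t) (htn : t ≤ n) :
    ∃ (L : List ℝ) (h : t - 1 < L.length), L.Pairwise (· ≥ ·) ∧ L.Perm (List.ofFn s) ∧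
      kthLargest s t = L[t - 1] :=
  ⟨_, by simp; omega, List.pairwise_insertionSort _ _, List.perm_insertionSort _ _,
    List.getD_eq_getElem _ _ _⟩

lemma card_kthLargest_lt_le (ht : 0 < t) (htn : t ≤ n) : #{j | kthLargest s t < s j} ≤ t - 1 := by
  obtain ⟨L, hi, hL, hperm, hT⟩ := exists_sorted_kthLargest_eq_getElem (s := s) ht htn
  rw [card_filter_univ_eq_countP_ofFn, ← hperm.countP_eq, hT]
  exact List.countP_getElem_lt_le_of_pairwise_ge hL hi

lemma le_card_kthLargest_le (ht : 0 < t) (htn : t ≤ n) : t ≤ #{j | kthLargest s t ≤ s j} := by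
  obtain ⟨L, hi, hL, hperm, hT⟩ := exists_sorted_kthLargest_eq_getElem (s := s) ht htn
  rw [card_filter_univ_eq_countP_ofFn, ← hperm.countP_eq, hT]
  have := List.lt_countP_getElem_le_of_pairwise_ge hL hi
  omega

lemma kthLargest_eq_zero_of_lt (h : n < t) : kthLargest s t = 0 :=
  List.getD_eq_default _ _ (by simp; omega)

end kthLargest

section topSet

variable {α β : Type*} [Fintype α] [LinearOrder β]

def topSet (f : α → β) (m : ℕ) : Finset α := {a | #{b | f a < f b} < m}

variable {f : α → β} {m : ℕ}

lemma mem_topSet_of_le {a b : α} (ha : a ∈ topSet f m) (hab : f a ≤ f b) : b ∈ topSet f m := by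
  simp only [topSet, mem_filter, mem_univ, true_and] at ha ⊢
  refine lt_of_le_of_lt (card_le_card fun x hx => ?_) ha
  simp only [mem_filter, mem_univ, true_and] at hx ⊢
  exact hab.trans_lt hx

lemma card_topSet (hf : Injective f) (m : ℕ) : #(topSet f m) = min m (Fintype.card α) := by
  set r : α → ℕ := fun a => #{b | f a < f b}
  have r_anti {a b : α} (h : f a < f b) : r b < r a := by
    refine card_lt_card ⟨fun x hx => ?_, fun hsub => ?_⟩
    · simp only [mem_filter, mem_univ, true_and] at hx ⊢
      exact h.trans hx
    · simpa using hsub (mem_filter.mpr ⟨mem_univ b, h⟩)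
  have r_inj : Injective r := by
    intro a b h
    by_contra hne
    rcases lt_or_gt_of_ne (hf.ne hne) with h' | h'
    · exact (r_anti h').ne' h
    · exact (r_anti h').ne h
  have r_range : univ.image r = range (Fintype.card α) := by
    refine eq_of_subset_of_card_le (fun x hx => ?_)
      (by rw [card_image_of_injective _ r_inj, card_range, card_univ])
    obtain ⟨a, -, rfl⟩ := mem_image.mp hx
    exact mem_range.mpr (card_lt_univ_of_notMem (x := a) (by simp))
  calc #(topSet f m) = #((univ.image r).filter (· < m)) := by
        rw [filter_image, card_image_of_injective _ r_inj]; rfl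
    _ = min m (Fintype.card α) := by
        rw [r_range, show (range (Fintype.card α)).filter (· < m) = range (min m (Fintype.card α))
          by ext; simp; omega, card_range]

lemma card_topSet_le (hf : Injective f) (m : ℕ) : #(topSet f m) ≤ m :=
  (card_topSet hf m).trans_le (min_le_left _ _)

end topSet

section Coins

variable {n : ℕ}

/-- The number of entries of `P` that the coin flips `c` turn into samples. -/
def numSamples (P : Finset (Fin n × Bool)) (c : Fin n → Bool) : ℕ := #{p ∈ P | p.2 = c p.1}

/-- Negating every coin exchanges samples and awards. -/
def flipCoins : (Fin n → Bool) ≃ (Fin n → Bool) := Equiv.piCongrRight fun _ => Equiv.boolNot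

lemma flipCoins_apply (c : Fin n → Bool) (i : Fin n) : flipCoins c i = !c i := rfl

lemma numSamples_add_numSamples_flipCoins (P : Finset (Fin n × Bool)) (c : Fin n → Bool) :
    numSamples P c + numSamples P (flipCoins c) = #P := by
  rw [numSamples, numSamples, ← card_filter_add_card_filter_not (s := P) (fun p => p.2 = c p.1)]
  congr 2
  ext p
  simp [flipCoins_apply, Bool.eq_not_iff]

lemma numSamples_eq_card (P : Finset (Fin n × Bool)) (c : Fin n → Bool) :
    numSamples P c = #{i | (i, c i) ∈ P} :=
  card_nbij' Prod.fst (fun i => (i, c i))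
    (fun p hp => by
      obtain ⟨hp, hpc⟩ := mem_filter.mp (mem_coe.mp hp)
      simpa [← hpc] using hp)
    (fun i hi => by simpa using hi)
    (fun p hp => Prod.ext rfl (mem_filter.mp (mem_coe.mp hp)).2.symm) (fun _ _ => rfl)

lemma sum_pow_numSamples_le (P : Finset (Fin n × Bool)) {u : ℝ} (hu : 0 ≤ u) :
    ∑ c : Fin n → Bool, u ^ numSamples P c ≤ 2 ^ n * ((1 + u) / 2) ^ #P := by
  set g : Fin n → Bool → ℝ := fun i b => if (i, b) ∈ P then u else 1
  set h : Fin n → Bool → ℝ := fun i b => if (i, b) ∈ P then (1 + u) / 2 else 1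
  have hg (c : Fin n → Bool) : u ^ numSamples P c = ∏ i, g i (c i) := by
    rw [numSamples_eq_card, ← prod_const, prod_filter]
  have hh : ((1 + u) / 2) ^ #P = ∏ i, h i true * h i false := by
    rw [← prod_const, ← filter_univ_mem P, prod_filter, Fintype.prod_prod_type]
    simp only [Fintype.prod_bool, h]
  have pair_le (i : Fin n) : ∑ b, g i b ≤ 2 * (h i true * h i false) := by
    simp only [Fintype.sum_bool, g, h]
    split_ifs <;> nlinarith [sq_nonneg (1 - u)]
  calc ∑ c : Fin n → Bool, u ^ numSamples P c = ∏ i, ∑ b, g i b := by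
        simp only [hg, Fintype.prod_sum]
    _ ≤ ∏ i, 2 * (h i true * h i false) :=
        prod_le_prod (fun i _ => sum_nonneg fun b _ => by positivity) fun i _ => pair_le i
    _ = 2 ^ n * ((1 + u) / 2) ^ #P := by
        rw [prod_mul_distrib, prod_const, card_univ, Fintype.card_fin, hh]

lemma one_add_exp_neg_div_two_le (x : ℝ) :
    (1 + Real.exp (-x)) / 2 ≤ Real.exp (x ^ 2 / 8 - x / 2) := by
  have h1 : Real.exp (-(x / 2)) * Real.exp (x / 2) = 1 := by rw [← Real.exp_add]; simp
  have h2 : Real.exp (-(x / 2)) * Real.exp (-(x / 2)) = Real.exp (-x) := by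
    rw [← Real.exp_add]; ring_nf
  calc (1 + Real.exp (-x)) / 2 = Real.exp (-(x / 2)) * Real.cosh (x / 2) := by
        rw [Real.cosh_eq]; linear_combination (-h1 - h2) / 2
    _ ≤ Real.exp (-(x / 2)) * Real.exp ((x / 2) ^ 2 / 2) := by
        gcongr; exact Real.cosh_le_exp_half_sq _
    _ = Real.exp (x ^ 2 / 8 - x / 2) := by rw [← Real.exp_add]; ring_nf

/-- Chernoff bound for the number of samples in `P`, with the exponential moment taken at
`λ = 2d / #P`. -/
lemma card_numSamples_le_le (P : Finset (Fin n × Bool)) {r d : ℕ} (h : 2 * r + d = #P) :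
    (#{c | numSamples P c ≤ r} : ℝ) ≤ 2 ^ n * Real.exp (-(d : ℝ) ^ 2 / (2 * #P)) := by
  set N : ℝ := (#P : ℝ)
  set lam : ℝ := 2 * d / N
  have hN : N = 2 * r + d := by simp only [N, ← h]; push_cast; ring
  have hu : Real.exp (-lam) ≤ 1 := Real.exp_le_one_iff.mpr (neg_nonpos.mpr (by positivity))
  have markov : (#{c | numSamples P c ≤ r} : ℝ) * Real.exp (-lam) ^ r
      ≤ ∑ c : Fin n → Bool, Real.exp (-lam) ^ numSamples P c := by
    rw [← nsmul_eq_mul]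
    refine (card_nsmul_le_sum _ _ _ fun c hc => pow_le_pow_of_le_one (by positivity) hu
      (mem_filter.mp hc).2).trans (sum_le_sum_of_subset_of_nonneg (subset_univ _)
      fun _ _ _ => by positivity)
  have exponent : lam * r + N * (lam ^ 2 / 8 - lam / 2) = -(d : ℝ) ^ 2 / (2 * N) := by
    rcases eq_or_ne N 0 with hN0 | hN0
    · have : (d : ℝ) = 0 := by linarith [(Nat.cast_nonneg r : (0 : ℝ) ≤ r),
        (Nat.cast_nonneg d : (0 : ℝ) ≤ d)]
      simp [lam, hN0, this]
    · simp only [lam]; field_simp; rw [hN]; ring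
  have moment := (sum_pow_numSamples_le P (Real.exp_pos (-lam)).le).trans
    (mul_le_mul_of_nonneg_left (pow_le_pow_left₀ (by positivity)
      (one_add_exp_neg_div_two_le lam) _) (by positivity))
  rw [← Real.exp_nat_mul] at markov moment
  calc (#{c | numSamples P c ≤ r} : ℝ)
        = #{c | numSamples P c ≤ r} * Real.exp (r * -lam) * Real.exp (lam * r) := by
          rw [mul_assoc, ← Real.exp_add]; ring_nf; simp
    _ ≤ 2 ^ n * Real.exp (N * (lam ^ 2 / 8 - lam / 2)) * Real.exp (lam * r) :=
          mul_le_mul_of_nonneg_right (markov.trans moment) (Real.exp_pos _).le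
    _ = 2 ^ n * Real.exp (-(d : ℝ) ^ 2 / (2 * N)) := by
          rw [← exponent, Real.exp_add]; ring

end Coins

lemma exp_neg_sq_div_le_exp_neg_sq_div {m d N k : ℕ} (hmd : m ≤ d) (hN : 0 < N)
    (hNk : N ≤ 4 * k) :
    Real.exp (-(d : ℝ) ^ 2 / (2 * N)) ≤ Real.exp (-(m : ℝ) ^ 2 / (8 * k)) := by
  rw [Real.exp_le_exp, neg_div, neg_div, neg_le_neg_iff]
  have hN' : (0 : ℝ) < N := by exact_mod_cast hN
  have hNk' : (N : ℝ) ≤ 4 * k := by exact_mod_cast hNk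
  calc (m : ℝ) ^ 2 / (8 * k) ≤ (m : ℝ) ^ 2 / (2 * N) :=
        div_le_div_of_nonneg_left (by positivity) (by positivity) (by linarith)
    _ ≤ (d : ℝ) ^ 2 / (2 * N) := by gcongr

section PairDistribution

variable {n : ℕ} (X : Fin n → ℝ × ℝ)

def pairEntry (p : Fin n × Bool) : ℝ := if p.2 then (X p.1).1 else (X p.1).2

variable {X}

lemma sampleVec_apply (c : Fin n → Bool) (i : Fin n) : sampleVec X c i = pairEntry X (i, c i) :=
  rfl

lemma sampleVec_flipCoins (c : Fin n → Bool) : sampleVec X (flipCoins c) = awardVec X c := by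
  ext i
  cases h : c i <;> simp [sampleVec, awardVec, flipCoins_apply, h]

lemma card_le_numSamples_topSet {m : ℕ} {q : Fin n × Bool} (hq : q ∈ topSet (pairEntry X) m)
    {T : ℝ} (hqT : pairEntry X q ≤ T) (c : Fin n → Bool) :
    #{j | T ≤ sampleVec X c j} ≤ numSamples (topSet (pairEntry X) m) c := by
  rw [numSamples_eq_card]
  refine card_le_card fun j hj => ?_
  simp only [mem_filter, mem_univ, true_and] at hj ⊢
  exact mem_topSet_of_le hq (hqT.trans hj)

variable {ℓ τ k : ℕ}

lemma le_card_awardVec_gt_kthLargest (hX : Injective (pairEntry X)) (hτ : 0 < τ) (hτn : τ ≤ n)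
    {c : Fin n → Bool}
    (hA : ℓ ≤ numSamples (topSet (pairEntry X) (τ + ℓ - 1)) (flipCoins c)) :
    ℓ ≤ #{i | kthLargest (sampleVec X c) τ < awardVec X c i} := by
  set T := kthLargest (sampleVec X c) τ
  set P := topSet (pairEntry X) (τ + ℓ - 1)
  have hPT : ∀ p ∈ P, T < pairEntry X p := by
    intro p hp
    by_contra! hpT
    have hsamples : τ ≤ numSamples P c :=
      (le_card_kthLargest_le hτ hτn).trans (card_le_numSamples_topSet hp hpT c)
    have := numSamples_add_numSamples_flipCoins P c
    have : #P ≤ τ + ℓ - 1 := card_topSet_le hX _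
    omega
  refine hA.trans ?_
  rw [numSamples_eq_card, ← sampleVec_flipCoins]
  exact card_le_card fun i hi => mem_filter.mpr ⟨mem_univ i, hPT _ (mem_filter.mp hi).2⟩

lemma card_awardVec_gt_kthLargest_lt (hX : Injective (pairEntry X)) (hτ : 0 < τ) (hτn : τ ≤ n)
    {c : Fin n → Bool}
    (hB : τ ≤ numSamples (topSet (pairEntry X) (k + τ - 1)) c) :
    #{i | kthLargest (sampleVec X c) τ < awardVec X c i} < k := by
  set T := kthLargest (sampleVec X c) τ
  set P := topSet (pairEntry X) (k + τ - 1)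
  obtain ⟨j, hjP, hjT⟩ : ∃ j, (j, c j) ∈ P ∧ pairEntry X (j, c j) ≤ T := by
    by_contra! hP
    have : numSamples P c ≤ #{j | T < sampleVec X c j} := by
      rw [numSamples_eq_card]
      exact card_le_card fun j hj => mem_filter.mpr ⟨mem_univ j, hP j (mem_filter.mp hj).2⟩
    have : #{j | T < sampleVec X c j} ≤ τ - 1 := card_kthLargest_lt_le hτ hτn
    omega
  by_contra! hk
  have hsamples : τ ≤ numSamples P c :=
    (le_card_kthLargest_le hτ hτn).trans (card_le_numSamples_topSet hjP hjT c)
  have hawards : k ≤ numSamples P (flipCoins c) := by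
    refine hk.trans ((card_le_card fun i hi => ?_).trans
      (card_le_numSamples_topSet hjP hjT (flipCoins c)))
    simp only [mem_filter, mem_univ, true_and, sampleVec_flipCoins] at hi ⊢
    exact hi.le
  have := numSamples_add_numSamples_flipCoins P c
  have : #P ≤ k + τ - 1 := card_topSet_le hX _
  omega

lemma card_numSamples_topSet_flipCoins_lt_le (hX : Injective (pairEntry X)) (hℓ : 0 < ℓ)
    (hℓτ : ℓ ≤ τ) (hτk : τ ≤ k) (hτn : τ ≤ n) :
    (#{c | numSamples (topSet (pairEntry X) (τ + ℓ - 1)) (flipCoins c) < ℓ} : ℝ) ≤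
      2 ^ n * Real.exp (-((min (k - τ) (τ - ℓ) : ℕ) : ℝ) ^ 2 / (8 * k)) := by
  set P := topSet (pairEntry X) (τ + ℓ - 1)
  have hP : #P = τ + ℓ - 1 := by
    rw [card_topSet hX, Fintype.card_prod, Fintype.card_fin, Fintype.card_bool]; omega
  have hflip : #{c | numSamples P (flipCoins c) < ℓ} = #{c | numSamples P c ≤ ℓ - 1} :=
    card_equiv flipCoins fun c => by simp only [mem_filter, mem_univ, true_and]; omega
  rw [hflip]
  refine (card_numSamples_le_le P (r := ℓ - 1) (d := τ - ℓ + 1) (by omega)).trans ?_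
  rw [hP]
  refine mul_le_mul_of_nonneg_left ?_ (by positivity)
  refine exp_neg_sq_div_le_exp_neg_sq_div ?_ ?_ ?_ <;> omega

lemma card_numSamples_topSet_lt_le (hX : Injective (pairEntry X)) (hτ : 0 < τ) (hτk : τ ≤ k)
    (hτn : τ ≤ n) :
    (#{c | numSamples (topSet (pairEntry X) (k + τ - 1)) c < τ} : ℝ) ≤
      2 ^ n * Real.exp (-((min (k - τ) (τ - ℓ) : ℕ) : ℝ) ^ 2 / (8 * k)) := by
  set P := topSet (pairEntry X) (k + τ - 1)
  have hcardP : #P = min (k + τ - 1) (2 * n) := by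
    rw [card_topSet hX, Fintype.card_prod, Fintype.card_fin, Fintype.card_bool, mul_comm]
  rcases le_or_gt (k + τ - 1) (2 * n) with h2n | h2n
  · have hP : #P = k + τ - 1 := by omega
    have hlt : #{c | numSamples P c < τ} = #{c | numSamples P c ≤ τ - 1} := by
      congr 1; exact filter_congr fun c _ => by omega
    rw [hlt]
    refine (card_numSamples_le_le P (r := τ - 1) (d := k - τ + 1) (by omega)).trans ?_
    rw [hP]
    refine mul_le_mul_of_nonneg_left ?_ (by positivity)
    refine exp_neg_sq_div_le_exp_neg_sq_div ?_ ?_ ?_ <;> omega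
  · have hP : P = univ := eq_univ_of_card P (by rw [hcardP]; simp [Fintype.card_prod]; omega)
    have hempty : ({c | numSamples P c < τ} : Finset (Fin n → Bool)) = ∅ :=
      filter_false_of_mem fun c _ => by simp [numSamples_eq_card, hP, hτn]
    rw [hempty, card_empty, Nat.cast_zero]
    positivity

variable (X ℓ τ k) in
noncomputable def badCoins : Finset (Fin n → Bool) :=
  {c | numSamples (topSet (pairEntry X) (τ + ℓ - 1)) (flipCoins c) < ℓ ∨
    numSamples (topSet (pairEntry X) (k + τ - 1)) c < τ}

lemma card_badCoins_le (hX : Injective (pairEntry X)) (hℓ : 0 < ℓ) (hℓτ : ℓ ≤ τ) (hτk : τ ≤ k)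
    (hτn : τ ≤ n) :
    (#(badCoins X ℓ τ k) : ℝ) ≤
      2 * (2 ^ n * Real.exp (-((min (k - τ) (τ - ℓ) : ℕ) : ℝ) ^ 2 / (8 * k))) := by
  have hA := card_numSamples_topSet_flipCoins_lt_le hX hℓ hℓτ hτk hτn
  have hB := card_numSamples_topSet_lt_le (ℓ := ℓ) hX (hℓ.trans_le hℓτ) hτk hτn
  have hunion : #(badCoins X ℓ τ k) ≤
      #{c | numSamples (topSet (pairEntry X) (τ + ℓ - 1)) (flipCoins c) < ℓ} +
        #{c | numSamples (topSet (pairEntry X) (k + τ - 1)) c < τ} := by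
    rw [badCoins, filter_or]; exact card_union_le _ _
  have := (Nat.cast_le (α := ℝ)).mpr hunion
  push_cast at this
  linarith

lemma TOPval_awardVec_le_TOPval_acceptSet (hX : Injective (pairEntry X)) (hτ : 0 < τ)
    (hτn : τ ≤ n) {c : Fin n → Bool} (hc : c ∉ badCoins X ℓ τ k) :
    TOPval ℓ univ (awardVec X c) ≤
      TOPval ℓ (acceptSet k (kthLargest (sampleVec X c) τ) (awardVec X c)) (awardVec X c) := by
  simp only [badCoins, mem_filter, mem_univ, true_and, not_or, not_lt] at hc
  rw [acceptSet_eq_filter (card_awardVec_gt_kthLargest_lt hX hτ hτn hc.2)]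
  exact TOPval_univ_le_TOPval_filter_lt (le_card_awardVec_gt_kthLargest hX hτ hτn hc.1)

lemma TOPval_awardVec_le_TOPval_acceptSet_of_lt (hnτ : n < τ) (hτk : τ ≤ k) (c : Fin n → Bool) :
    TOPval ℓ univ (awardVec X c) ≤
      TOPval ℓ (acceptSet k (kthLargest (sampleVec X c) τ) (awardVec X c)) (awardVec X c) := by
  rw [kthLargest_eq_zero_of_lt hnτ]
  exact TOPval_univ_le_TOPval_acceptSet_zero (hnτ.trans_le hτk)

end PairDistribution

section Expectation

variable {n ℓ τ k : ℕ} {X : Fin n → ℝ × ℝ}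

lemma TOPval_sampleVec_le_sum {C : Finset (Fin n × Bool)}
    (hC : ∀ D : Finset (Fin n × Bool), #D ≤ ℓ → ∑ p ∈ D, pairEntry X p ≤ ∑ p ∈ C, pairEntry X p)
    (c : Fin n → Bool) : TOPval ℓ univ (sampleVec X c) ≤ ∑ p ∈ C, pairEntry X p :=
  TOPval_le fun B _ hB => by
    have := hC (B.map ⟨fun i => (i, c i), fun _ _ h => (Prod.ext_iff.mp h).1⟩) (by rwa [card_map])
    rwa [sum_map] at this

lemma sum_filter_sample_le_TOPval {C : Finset (Fin n × Bool)} (hC : #C ≤ ℓ) (c : Fin n → Bool) :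
    ∑ p ∈ C with p.2 = c p.1, pairEntry X p ≤ TOPval ℓ univ (sampleVec X c) := by
  have hinj : Set.InjOn Prod.fst
      (({p ∈ C | p.2 = c p.1} : Finset (Fin n × Bool)) : Set (Fin n × Bool)) :=
    fun p hp q hq h => Prod.ext h (by
      rw [(mem_filter.mp (mem_coe.mp hp)).2, (mem_filter.mp (mem_coe.mp hq)).2, h])
  calc ∑ p ∈ C with p.2 = c p.1, pairEntry X p
        = ∑ i ∈ {p ∈ C | p.2 = c p.1}.image Prod.fst, sampleVec X c i := by
          rw [sum_image hinj]
          exact sum_congr rfl fun p hp => by rw [sampleVec_apply, ← (mem_filter.mp hp).2]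
    _ ≤ TOPval ℓ univ (sampleVec X c) :=
        le_TOPval (subset_univ _) (card_image_le.trans ((card_filter_le _ _).trans hC))

/-- Every entry of `C` is a sample for half of the coin flips and an award for the other half. -/
lemma two_pow_mul_sum_le_two_mul_sum_TOPval {C : Finset (Fin n × Bool)} (hC : #C ≤ ℓ) :
    2 ^ n * ∑ p ∈ C, pairEntry X p ≤ 2 * ∑ c, TOPval ℓ univ (awardVec X c) := by
  have hsplit (c : Fin n → Bool) : ∑ p ∈ C, pairEntry X p ≤
      TOPval ℓ univ (sampleVec X c) + TOPval ℓ univ (awardVec X c) := by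
    have hnot : ({p ∈ C | ¬p.2 = c p.1} : Finset (Fin n × Bool)) =
        {p ∈ C | p.2 = flipCoins c p.1} :=
      filter_congr fun p _ => by simp [flipCoins_apply, Bool.eq_not_iff]
    rw [← sum_filter_add_sum_filter_not C (fun p => p.2 = c p.1), hnot, ← sampleVec_flipCoins]
    exact add_le_add (sum_filter_sample_le_TOPval hC c) (sum_filter_sample_le_TOPval hC _)
  have hflip : ∑ c, TOPval ℓ univ (awardVec X c) = ∑ c, TOPval ℓ univ (sampleVec X c) :=
    Fintype.sum_equiv flipCoins _ _ fun c => by rw [sampleVec_flipCoins]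
  calc 2 ^ n * ∑ p ∈ C, pairEntry X p = ∑ _c : Fin n → Bool, ∑ p ∈ C, pairEntry X p := by
        simp [sum_const]
    _ ≤ ∑ c, (TOPval ℓ univ (sampleVec X c) + TOPval ℓ univ (awardVec X c)) :=
        sum_le_sum fun c _ => hsplit c
    _ = 2 * ∑ c, TOPval ℓ univ (awardVec X c) := by rw [sum_add_distrib, hflip]; ring

lemma sum_TOPval_sub_sum_TOPval_acceptSet_le (hX : Injective (pairEntry X)) (hℓ : 0 < ℓ)
    (hℓτ : ℓ ≤ τ) (hτk : τ ≤ k) :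
    ∑ c, TOPval ℓ univ (awardVec X c) -
        ∑ c, TOPval ℓ (acceptSet k (kthLargest (sampleVec X c) τ) (awardVec X c)) (awardVec X c) ≤
      4 * Real.exp (-((min (k - τ) (τ - ℓ) : ℕ) : ℝ) ^ 2 / (8 * k)) *
        ∑ c, TOPval ℓ univ (awardVec X c) := by
  set ε := Real.exp (-((min (k - τ) (τ - ℓ) : ℕ) : ℝ) ^ 2 / (8 * k))
  set A := fun c => TOPval ℓ univ (awardVec X c)
  set B := fun c => TOPval ℓ (acceptSet k (kthLargest (sampleVec X c) τ) (awardVec X c))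
    (awardVec X c)
  have hA0 : 0 ≤ ∑ c, A c := sum_nonneg fun _ _ => TOPval_nonneg
  rcases lt_or_ge n τ with hnτ | hτn
  · have hAB : ∑ c, A c ≤ ∑ c, B c :=
      sum_le_sum fun c _ => TOPval_awardVec_le_TOPval_acceptSet_of_lt hnτ hτk c
    have : 0 ≤ 4 * ε * ∑ c, A c := by positivity
    linarith
  obtain ⟨C, hCℓ, hCmax⟩ := exists_max_image ({C | #C ≤ ℓ} : Finset (Finset (Fin n × Bool)))
    (fun C => ∑ p ∈ C, pairEntry X p) ⟨∅, by simp⟩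
  simp only [mem_filter, mem_univ, true_and] at hCℓ hCmax
  set Y := ∑ p ∈ C, pairEntry X p
  have hY0 : 0 ≤ Y := by simpa using hCmax ∅ (by simp)
  have hloss (c : Fin n → Bool) : A c - B c ≤ if c ∈ badCoins X ℓ τ k then Y else 0 := by
    split_ifs with hc
    · have : A c ≤ Y := by
        simpa only [A, ← sampleVec_flipCoins] using TOPval_sampleVec_le_sum hCmax (flipCoins c)
      linarith [(TOPval_nonneg : 0 ≤ B c)]
    · linarith [TOPval_awardVec_le_TOPval_acceptSet hX (hℓ.trans_le hℓτ) hτn hc]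
  calc ∑ c, A c - ∑ c, B c = ∑ c, (A c - B c) := (sum_sub_distrib _ _).symm
    _ ≤ ∑ c, if c ∈ badCoins X ℓ τ k then Y else 0 := sum_le_sum fun c _ => hloss c
    _ = #(badCoins X ℓ τ k) * Y := by rw [sum_ite_mem, univ_inter, sum_const, nsmul_eq_mul]
    _ ≤ 2 * (2 ^ n * ε) * Y := by gcongr; exact card_badCoins_le hX hℓ hℓτ hτk hτn
    _ = 2 * ε * (2 ^ n * Y) := by ring
    _ ≤ 2 * ε * (2 * ∑ c, A c) :=
        mul_le_mul_of_nonneg_left (two_pow_mul_sum_le_two_mul_sum_TOPval hCℓ) (by positivity)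
    _ = 4 * ε * ∑ c, A c := by ring

end Expectation

theorem alg_tau_on_pair_distribution_general (n ℓ τ k : ℕ) (hℓ : 1 ≤ ℓ) (hℓτ : ℓ ≤ τ) (hτk : τ ≤ k)
    (X : Fin n → ℝ × ℝ)
    (hdistinct : Function.Injective
      (fun p : Fin n × Bool => if p.2 then (X p.1).1 else (X p.1).2)) :
    (1 - 4 * ℓ * Real.exp (-(((min (k - τ) (τ - ℓ) : ℕ) : ℝ) ^ 2) / (8 * k))) *
        (((2 : ℝ) ^ n)⁻¹ * ∑ c : Fin n → Bool, TOPval ℓ Finset.univ (awardVec X c)) ≤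
      ((2 : ℝ) ^ n)⁻¹ * ∑ c : Fin n → Bool,
        TOPval ℓ (acceptSet k (kthLargest (sampleVec X c) τ) (awardVec X c))
          (awardVec X c) := by
  set ε := Real.exp (-(((min (k - τ) (τ - ℓ) : ℕ) : ℝ) ^ 2) / (8 * k))
  have hloss := sum_TOPval_sub_sum_TOPval_acceptSet_le hdistinct hℓ hℓτ hτk
  have hA0 : 0 ≤ ∑ c : Fin n → Bool, TOPval ℓ univ (awardVec X c) :=
    sum_nonneg fun _ _ => TOPval_nonneg
  have hℓε : ε ≤ ℓ * ε := le_mul_of_one_le_left (Real.exp_pos _).le (by exact_mod_cast hℓ)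
  have := mul_le_mul_of_nonneg_right hℓε hA0
  rw [mul_left_comm]
  gcongr
  linarith

/-- **Key lemma for the single-sample ℓ-out-of-k prophet inequality.**
For pairs `X` of nonnegative reals with pairwise-distinct entries, when each pair is split
uniformly at random into a sample and an award, the algorithm `ALG^τ` (threshold = `τ`-th
largest sample, accept the first `k` awards above it) satisfies
`E_c[TOP_ℓ(S; v)] ≥ (1 − 4ℓ·e^{−(min(k−τ,τ−ℓ))²/(8k)}) · E_c[TOP_ℓ(v)]`. -/
theorem alg_tau_on_pair_distribution (n ℓ τ k : ℕ) (hℓ : 1 ≤ ℓ) (hℓτ : ℓ ≤ τ) (hτk : τ ≤ k)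
    (X : Fin n → ℝ × ℝ)
    (hnonneg : ∀ i, 0 ≤ (X i).1 ∧ 0 ≤ (X i).2)
    (hdistinct : Function.Injective
      (fun p : Fin n × Bool => if p.2 then (X p.1).1 else (X p.1).2)) :
    (1 - 4 * ℓ * Real.exp (-(((min (k - τ) (τ - ℓ) : ℕ) : ℝ) ^ 2) / (8 * k))) *
        (((2 : ℝ) ^ n)⁻¹ * ∑ c : Fin n → Bool, TOPval ℓ Finset.univ (awardVec X c)) ≤
      ((2 : ℝ) ^ n)⁻¹ * ∑ c : Fin n → Bool,
        TOPval ℓ (acceptSet k (kthLargest (sampleVec X c) τ) (awardVec X c))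
          (awardVec X c) :=
  alg_tau_on_pair_distribution_general n ℓ τ k hℓ hℓτ hτk X hdistinct
end

section
/- Let k ≥ 1 and let v_1,…,v_n be independent nonnegative real random variables with atomless distributions. Let T ∈ ℝ be a threshold satisfying Pr[max_{1≤i≤n} v_i < T] = (2/3)^{k−1}, and let S be the set consisting of the first (in the order i = 1,…,n) at most k indices i with v_i > T. Then E[max_{i∈S} v_i] ≥ (1 − (3/2)·e^{−k/6}) · E[max_{1≤i≤n} v_i], where the maximum over the empty set is 0. -/
/-!
Write `M = max_i v_i`, `A` for the payoff of `ALG_max` and `δ = (3/2) e^{-k/6}`. By the layer-cake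
formula it suffices to show `P(A > t) ≥ (1 - δ) P(M > t)` for every `t > 0`.

For `t ≤ T` this holds because `A > T` as soon as some value exceeds `T`, which happens with
probability `1 - (2/3)^{k-1} ≥ 1 - δ`. For `t > T`, split `{M > t}` according to the first index `j`
with `v_j > t`: this `j` is accepted unless at least `k` earlier values exceed `T`. Given `v_j`,
that event is increasing and "all earlier values are `≤ t`" is decreasing in the earlier values, so
by Harris's inequality the loss is at most a factor `P(at least k values exceed T)`. A Chernoff
bound with base `3/2` bounds this by `(2/3)^k ∏_l (1 + p_l/2)`, where `p_l = P(v_l > T)`, and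
`(1 + p/2)^2 (1 - p) ≤ 1` together with `∏_l (1 - p_l) = (2/3)^{k-1}` turns it into `δ`.
-/

open MeasureTheory ProbabilityTheory Finset

/-- The maximum of `v` over the finite set `A`, with the convention that the maximum
over the empty set is `0`. -/
noncomputable def maxVal {n : ℕ} (A : Finset (Fin n)) (v : Fin n → ℝ) : ℝ :=
  WithBot.unbotD 0 ((A.image v).max)

open Set

section MaxVal

variable {n : ℕ} {A : Finset (Fin n)} {f : Fin n → ℝ}

lemma maxVal_empty (f : Fin n → ℝ) : maxVal ∅ f = 0 := rfl

lemma maxVal_eq_sup' (hA : A.Nonempty) : maxVal A f = A.sup' hA f := by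
  rw [maxVal, ← coe_max' (hA.image f), WithBot.unbotD_coe, max'_eq_sup', sup'_image]
  rfl

lemma le_maxVal {i : Fin n} (hi : i ∈ A) : f i ≤ maxVal A f := by
  rw [maxVal_eq_sup' ⟨i, hi⟩]
  exact le_sup' f hi

lemma maxVal_le {c : ℝ} (hc : 0 ≤ c) (h : ∀ i ∈ A, f i ≤ c) : maxVal A f ≤ c := by
  rcases A.eq_empty_or_nonempty with rfl | hA
  · exact hc
  · rw [maxVal_eq_sup' hA]
    exact sup'_le hA f h

lemma maxVal_nonneg (hf : ∀ i, 0 ≤ f i) : 0 ≤ maxVal A f := by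
  rcases A.eq_empty_or_nonempty with rfl | ⟨i, hi⟩
  · exact le_rfl
  · exact (hf i).trans (le_maxVal hi)

lemma maxVal_mono {B : Finset (Fin n)} (hAB : A ⊆ B) (hf : ∀ i, 0 ≤ f i) :
    maxVal A f ≤ maxVal B f :=
  maxVal_le (maxVal_nonneg hf) fun _ hi => le_maxVal (hAB hi)

lemma lt_maxVal_iff {t : ℝ} (ht : 0 ≤ t) : t < maxVal A f ↔ ∃ i ∈ A, t < f i := by
  rcases A.eq_empty_or_nonempty with rfl | hA
  · simpa [maxVal_empty] using ht
  · rw [maxVal_eq_sup' hA, lt_sup'_iff]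

lemma maxVal_eq_maxVal_univ_ite (hf : ∀ i, 0 ≤ f i) :
    maxVal A f = maxVal univ (fun i => if i ∈ A then f i else 0) := by
  refine le_antisymm (maxVal_le (maxVal_nonneg fun i => ?_) fun i hi => ?_)
    (maxVal_le (maxVal_nonneg hf) fun i _ => ?_)
  · split_ifs <;> simp [hf i]
  · simpa [hi] using le_maxVal (f := fun i => if i ∈ A then f i else 0) (mem_univ i)
  · split_ifs with hi
    exacts [le_maxVal hi, maxVal_nonneg hf]

lemma measurable_maxVal {Ω : Type*} [MeasurableSpace Ω] {g : Fin n → Ω → ℝ}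
    (hg : ∀ i, Measurable (g i)) : Measurable fun ω => maxVal A (g · ω) := by
  rcases A.eq_empty_or_nonempty with rfl | hA
  · exact measurable_const
  · simp_rw [maxVal_eq_sup' hA, ← Finset.sup'_apply]
    exact measurable_sup' hA fun i _ => hg i

end MaxVal

lemma prod_one_add_half_sq_mul_prod_one_sub_le_one {ι : Type*} (s : Finset ι) {p : ι → ℝ}
    (h0 : ∀ i ∈ s, 0 ≤ p i) (h1 : ∀ i ∈ s, p i ≤ 1) :
    (∏ i ∈ s, (1 + p i / 2)) ^ 2 * ∏ i ∈ s, (1 - p i) ≤ 1 := by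
  rw [← Finset.prod_pow, ← prod_mul_distrib]
  refine prod_le_one (fun i hi => mul_nonneg (sq_nonneg _) (sub_nonneg.2 (h1 i hi)))
    fun i hi => ?_
  have := h0 i hi
  nlinarith [pow_nonneg this 3]

lemma two_thirds_pow_le_exp (k : ℕ) : (2 / 3 : ℝ) ^ k ≤ Real.exp (-k / 3) := by
  calc (2 / 3 : ℝ) ^ k ≤ Real.exp (-1 / 3) ^ k := by
        gcongr
        linarith [Real.add_one_le_exp (-1 / 3)]
    _ = Real.exp (-k / 3) := by rw [← Real.exp_nat_mul]; ring_nf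

lemma two_thirds_pow_sub_one_le {k : ℕ} (hk : 1 ≤ k) :
    (2 / 3 : ℝ) ^ (k - 1) ≤ 3 / 2 * Real.exp (-k / 6) := by
  have hpow : (2 / 3 : ℝ) ^ (k - 1) * (2 / 3) = (2 / 3) ^ k := pow_sub_one_mul (by omega) _
  have hexp : Real.exp (-k / 3) ≤ Real.exp (-k / 6) := Real.exp_le_exp.2 (by
    have : (0 : ℝ) ≤ k := k.cast_nonneg
    linarith)
  linarith [two_thirds_pow_le_exp k]

section Probability

variable {Ω : Type*} [MeasurableSpace Ω] {μ : Measure Ω}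

theorem mul_integral_le_integral_of_measureReal_lt [IsFiniteMeasure μ] {X Y : Ω → ℝ}
    (hX : 0 ≤ X) (hXm : AEMeasurable X μ) (hY : 0 ≤ Y) (hYi : Integrable Y μ) {c : ℝ}
    (h : ∀ t > 0, c * μ.real {ω | t < X ω} ≤ μ.real {ω | t < Y ω}) :
    c * ∫ ω, X ω ∂μ ≤ ∫ ω, Y ω ∂μ := by
  rcases le_or_gt c 0 with hc | hc
  · exact (mul_nonpos_of_nonpos_of_nonneg hc (integral_nonneg hX)).trans (integral_nonneg hY)
  have hlin : ENNReal.ofReal c * ∫⁻ ω, ENNReal.ofReal (X ω) ∂μ ≤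
      ∫⁻ ω, ENNReal.ofReal (Y ω) ∂μ := by
    rw [lintegral_eq_lintegral_meas_lt μ (ae_of_all _ hX) hXm,
      lintegral_eq_lintegral_meas_lt μ (ae_of_all _ hY) hYi.aemeasurable,
      ← lintegral_const_mul' _ _ ENNReal.ofReal_ne_top]
    refine setLIntegral_mono' measurableSet_Ioi fun t ht => ?_
    rw [← ofReal_measureReal, ← ofReal_measureReal, ← ENNReal.ofReal_mul hc.le]
    exact ENNReal.ofReal_le_ofReal (h t ht)
  rw [integral_eq_lintegral_of_nonneg_ae (ae_of_all _ hX) hXm.aestronglyMeasurable,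
    integral_eq_lintegral_of_nonneg_ae (ae_of_all _ hY) hYi.aestronglyMeasurable,
    ← ENNReal.toReal_ofReal hc.le, ← ENNReal.toReal_mul]
  exact ENNReal.toReal_mono hYi.lintegral_lt_top.ne hlin

variable [IsProbabilityMeasure μ]

lemma measureReal_preimage_Iic {X : Ω → ℝ} (hX : Measurable X) (T : ℝ) :
    μ.real (X ⁻¹' Iic T) = 1 - μ.real (X ⁻¹' Ioi T) := by
  rw [← probReal_compl_eq_one_sub (hX measurableSet_Ioi), ← Set.preimage_compl, compl_Ioi]

lemma measureReal_inter_le_mul_of_union_eq_univ {B C : Set Ω} (hC : MeasurableSet C)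
    (h : B ∪ C = univ) : μ.real (B ∩ C) ≤ μ.real B * μ.real C := by
  have hsum := measureReal_union_add_inter (μ := μ) (s := B) hC
  rw [h, probReal_univ] at hsum
  nlinarith [mul_nonneg (sub_nonneg.2 (measureReal_le_one (μ := μ) (s := B)))
    (sub_nonneg.2 (measureReal_le_one (μ := μ) (s := C)))]

lemma measureReal_Iic_inter_Ioi_le {X : Ω → ℝ} (hX : Measurable X) (t T : ℝ) :
    μ.real (X ⁻¹' Iic t ∩ X ⁻¹' Ioi T) ≤ μ.real (X ⁻¹' Iic t) * μ.real (X ⁻¹' Ioi T) := by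
  rcases le_or_gt t T with h | h
  · rw [((Iic_disjoint_Ioi h).preimage X).inter_eq, measureReal_empty]
    positivity
  · refine measureReal_inter_le_mul_of_union_eq_univ (hX measurableSet_Ioi) ?_
    rw [← Set.preimage_union, Iic_union_Ioi_of_le h.le, preimage_univ]

end Probability

namespace AlgMax

variable {Ω : Type*} {n : ℕ} {v : Fin n → Ω → ℝ} {J : Finset (Fin n)}

def allLE (v : Fin n → Ω → ℝ) (J : Finset (Fin n)) (t : ℝ) : Set Ω :=
  {ω | ∀ l ∈ J, v l ω ≤ t}

def manyAbove (v : Fin n → Ω → ℝ) (J : Finset (Fin n)) (T : ℝ) (k : ℕ) : Set Ω :=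
  {ω | k ≤ #{l ∈ J | T < v l ω}}

def firstAbove (v : Fin n → Ω → ℝ) (t : ℝ) (j : Fin n) : Set Ω :=
  v j ⁻¹' Ioi t ∩ allLE v (Finset.Iio j) t

lemma allLE_insert {j : Fin n} (t : ℝ) :
    allLE v (insert j J) t = v j ⁻¹' Iic t ∩ allLE v J t := by
  ext; simp [allLE]

lemma manyAbove_zero (T : ℝ) : manyAbove v J T 0 = univ := by
  ext; simp [manyAbove]

lemma manyAbove_empty_succ (T : ℝ) (k : ℕ) : manyAbove v ∅ T (k + 1) = ∅ := by
  ext; simp [manyAbove]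

lemma manyAbove_succ_subset (T : ℝ) (k : ℕ) : manyAbove v J T (k + 1) ⊆ manyAbove v J T k :=
  fun _ h => (Nat.le_succ k).trans h

lemma manyAbove_mono {J' : Finset (Fin n)} (hJ : J ⊆ J') (T : ℝ) (k : ℕ) :
    manyAbove v J T k ⊆ manyAbove v J' T k :=
  fun _ h => h.trans (card_le_card (filter_subset_filter _ hJ))

lemma manyAbove_insert_succ {j : Fin n} (hj : j ∉ J) (T : ℝ) (k : ℕ) :
    manyAbove v (insert j J) T (k + 1) =
      (v j ⁻¹' Ioi T ∩ manyAbove v J T k) ∪ (v j ⁻¹' Iic T ∩ manyAbove v J T (k + 1)) := by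
  ext ω
  by_cases h : T < v j ω
  · simp [manyAbove, filter_insert, h, card_insert_of_notMem (fun hm => hj (mem_filter.1 hm).1)]
  · simp [manyAbove, filter_insert, h, le_of_not_gt h]

lemma allLE_inter_manyAbove_insert_succ {j : Fin n} (hj : j ∉ J) (t T : ℝ) (k : ℕ) :
    allLE v (insert j J) t ∩ manyAbove v (insert j J) T (k + 1) =
      (v j ⁻¹' (Iic t ∩ Ioi T) ∩ (allLE v J t ∩ manyAbove v J T k)) ∪
        (v j ⁻¹' (Iic t \ Ioi T) ∩ (allLE v J t ∩ manyAbove v J T (k + 1))) := by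
  rw [allLE_insert, manyAbove_insert_succ hj]
  ext ω
  simp only [Set.mem_inter_iff, Set.mem_union, Set.mem_preimage, Set.mem_sdiff, Set.mem_Ioi,
    Set.mem_Iic, not_lt]
  tauto

lemma exists_mem_firstAbove {t : ℝ} {ω : Ω} (h : ∃ i, t < v i ω) : ∃ j, ω ∈ firstAbove v t j := by
  obtain ⟨j, hj⟩ := exists_minimal_of_wellFoundedLT _ h
  refine ⟨j, hj.prop, fun l hl => ?_⟩
  exact not_lt.1 fun hlt => (minimal_iff_forall_lt.1 hj).2 (Finset.mem_Iio.1 hl) hlt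

lemma pairwise_disjoint_firstAbove (t : ℝ) :
    Pairwise (Function.onFun Disjoint (firstAbove v t)) := by
  intro i j hij
  refine Set.disjoint_left.2 fun ω hi hj => ?_
  rcases hij.lt_or_gt with h | h
  · exact (hj.2 i (Finset.mem_Iio.2 h)).not_gt hi.1
  · exact (hi.2 j (Finset.mem_Iio.2 h)).not_gt hj.1

lemma iUnion_firstAbove {t : ℝ} (ht : 0 ≤ t) :
    ⋃ j, firstAbove v t j = {ω | t < maxVal univ (v · ω)} := by
  ext ω
  simp only [Set.mem_iUnion, Set.mem_ofPred_eq, lt_maxVal_iff ht]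
  exact ⟨fun ⟨j, hj⟩ => ⟨j, mem_univ j, hj.1⟩, fun ⟨j, _, hj⟩ => exists_mem_firstAbove ⟨j, hj⟩⟩

lemma mem_acceptSet_iff {k : ℕ} {T : ℝ} {i : Fin n} {ω : Ω} :
    i ∈ acceptSet k T (v · ω) ↔ T < v i ω ∧ ω ∉ manyAbove v (Finset.Iio i) T k := by
  have : ({j | j < i ∧ T < v j ω} : Finset (Fin n)) = {l ∈ Finset.Iio i | T < v l ω} := by
    ext; simp
  simp [acceptSet, manyAbove, this]

lemma firstAbove_diff_manyAbove_subset {k : ℕ} {T t : ℝ} (hTt : T ≤ t) (j : Fin n) :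
    firstAbove v t j \ manyAbove v (Finset.Iio j) T k ⊆
      {ω | t < maxVal (acceptSet k T (v · ω)) (v · ω)} := fun _ ⟨hj, hB⟩ =>
  hj.1.trans_le (le_maxVal (mem_acceptSet_iff.2 ⟨hTt.trans_lt hj.1, hB⟩))

lemma compl_allLE_subset {k : ℕ} (hk : 1 ≤ k) (T : ℝ) :
    (allLE v univ T)ᶜ ⊆ {ω | T < maxVal (acceptSet k T (v · ω)) (v · ω)} := by
  intro ω hω
  obtain ⟨j, hj⟩ := exists_mem_firstAbove (by simpa [allLE] using hω)
  refine firstAbove_diff_manyAbove_subset le_rfl j ⟨hj, fun hB => ?_⟩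
  have : {l ∈ Finset.Iio j | T < v l ω} = ∅ :=
    filter_eq_empty_iff.2 fun l hl => not_lt.2 (hj.2 l hl)
  rw [manyAbove, Set.mem_ofPred_eq, this, Finset.card_empty] at hB
  omega

abbrev sigmaGen (v : Fin n → Ω → ℝ) (J : Finset (Fin n)) : MeasurableSpace Ω :=
  ⨆ l ∈ J, MeasurableSpace.comap (v l) inferInstance

lemma measurableSet_sigmaGen_preimage {l : Fin n} (hl : l ∈ J) {S : Set ℝ}
    (hS : MeasurableSet S) : MeasurableSet[sigmaGen v J] (v l ⁻¹' S) :=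
  le_iSup₂ (f := fun l (_ : l ∈ J) => MeasurableSpace.comap (v l) inferInstance) l hl _
    ⟨S, hS, rfl⟩

lemma measurableSet_allLE (t : ℝ) : MeasurableSet[sigmaGen v J] (allLE v J t) := by
  have : allLE v J t = ⋂ l ∈ J, v l ⁻¹' Iic t := by ext; simp [allLE]
  rw [this]
  exact .biInter J.countable_toSet fun l hl => measurableSet_sigmaGen_preimage hl measurableSet_Iic

lemma measurableSet_manyAbove (T : ℝ) (k : ℕ) :
    MeasurableSet[sigmaGen v J] (manyAbove v J T k) := by
  have hcount : Measurable[sigmaGen v J] fun ω => #{l ∈ J | T < v l ω} := by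
    simp_rw [card_filter]
    exact Finset.measurable_sum _ fun l hl =>
      Measurable.ite (measurableSet_sigmaGen_preimage hl measurableSet_Ioi)
        measurable_const measurable_const
  exact hcount measurableSet_Ici

variable [MeasurableSpace Ω]

lemma sigmaGen_le (hmeas : ∀ i, Measurable (v i)) : sigmaGen v J ≤ ‹MeasurableSpace Ω› :=
  iSup₂_le fun l _ => (hmeas l).comap_le

lemma measurableSet_firstAbove (hmeas : ∀ i, Measurable (v i)) (t : ℝ) (j : Fin n) :
    MeasurableSet (firstAbove v t j) :=
  (hmeas j measurableSet_Ioi).inter (sigmaGen_le hmeas _ (measurableSet_allLE t))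

lemma measurable_maxVal_acceptSet (hmeas : ∀ i, Measurable (v i))
    (hnonneg : ∀ i ω, 0 ≤ v i ω) (k : ℕ) (T : ℝ) :
    Measurable fun ω => maxVal (acceptSet k T (v · ω)) (v · ω) := by
  simp_rw [maxVal_eq_maxVal_univ_ite (hnonneg · _)]
  refine measurable_maxVal fun i => Measurable.ite ?_ (hmeas i) measurable_const
  have : {ω | i ∈ acceptSet k T (v · ω)} = v i ⁻¹' Ioi T ∩ (manyAbove v (Finset.Iio i) T k)ᶜ := by
    ext
    exact mem_acceptSet_iff
  rw [this]
  exact (hmeas i measurableSet_Ioi).inter (sigmaGen_le hmeas _ (measurableSet_manyAbove T k)).compl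

variable {μ : Measure Ω}

lemma measureReal_preimage_inter_eq_mul (hmeas : ∀ i, Measurable (v i)) (hindep : iIndepFun v μ)
    {j : Fin n} (hj : j ∉ J) {S : Set ℝ} (hS : MeasurableSet S) {X : Set Ω}
    (hX : MeasurableSet[sigmaGen v J] X) :
    μ.real (v j ⁻¹' S ∩ X) = μ.real (v j ⁻¹' S) * μ.real X := by
  have hdisj : Disjoint ({j} : Set (Fin n)) J := by simpa using hj
  set m := fun i => MeasurableSpace.comap (v i) inferInstance
  have h := (Indep_iff _ _ _).1 <| indep_iSup_of_disjoint (m := m) (fun i => (hmeas i).comap_le)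
    ((iIndepFun_iff_iIndep _ _ _).1 hindep) hdisj
  simp only [measureReal_def, ← ENNReal.toReal_mul]
  congr 1
  exact h _ _ (le_iSup₂ (f := fun i (_ : i ∈ ({j} : Set (Fin n))) => m i) j rfl _ ⟨S, hS, rfl⟩) hX

lemma measureReal_allLE_insert (hmeas : ∀ i, Measurable (v i)) (hindep : iIndepFun v μ)
    {j : Fin n} (hj : j ∉ J) (t : ℝ) :
    μ.real (allLE v (insert j J) t) = μ.real (v j ⁻¹' Iic t) * μ.real (allLE v J t) := by
  rw [allLE_insert]
  exact measureReal_preimage_inter_eq_mul hmeas hindep hj measurableSet_Iic (measurableSet_allLE t)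

lemma measure_allLE_univ_eq_of_atomless (hatomless : ∀ i (x : ℝ), μ {ω | v i ω = x} = 0)
    (T : ℝ) : μ (allLE v univ T) = μ {ω | ∀ i, v i ω < T} := by
  refine le_antisymm ?_ (measure_mono fun ω h l _ => (h l).le)
  calc μ (allLE v univ T) ≤ μ ({ω | ∀ i, v i ω < T} ∪ ⋃ i, {ω | v i ω = T}) := by
        refine measure_mono fun ω h => ?_
        by_cases h' : ∀ i, v i ω < T
        · exact Or.inl h'
        · obtain ⟨i, hi⟩ := not_forall.1 h'
          exact Or.inr (Set.mem_iUnion.2 ⟨i, le_antisymm (h i (mem_univ i)) (not_lt.1 hi)⟩)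
    _ ≤ μ {ω | ∀ i, v i ω < T} + μ (⋃ i, {ω | v i ω = T}) := measure_union_le _ _
    _ = μ {ω | ∀ i, v i ω < T} := by rw [measure_iUnion_null fun i => hatomless i T, add_zero]

variable [IsProbabilityMeasure μ]

lemma measureReal_manyAbove_insert_succ (hmeas : ∀ i, Measurable (v i)) (hindep : iIndepFun v μ)
    {j : Fin n} (hj : j ∉ J) (T : ℝ) (k : ℕ) :
    μ.real (manyAbove v (insert j J) T (k + 1)) =
      μ.real (v j ⁻¹' Ioi T) * μ.real (manyAbove v J T k) +
        (1 - μ.real (v j ⁻¹' Ioi T)) * μ.real (manyAbove v J T (k + 1)) := by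
  have hdisj : Disjoint (v j ⁻¹' Ioi T) (v j ⁻¹' Iic T) :=
    ((Iic_disjoint_Ioi le_rfl).preimage (v j)).symm
  rw [manyAbove_insert_succ hj, measureReal_union (hdisj.mono inter_subset_left inter_subset_left)
      ((hmeas j measurableSet_Iic).inter (sigmaGen_le hmeas _ (measurableSet_manyAbove T _))),
    measureReal_preimage_inter_eq_mul hmeas hindep hj measurableSet_Ioi
      (measurableSet_manyAbove T k),
    measureReal_preimage_inter_eq_mul hmeas hindep hj measurableSet_Iic
      (measurableSet_manyAbove T (k + 1)),
    measureReal_preimage_Iic (hmeas j)]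

lemma measureReal_allLE_inter_manyAbove_insert_succ (hmeas : ∀ i, Measurable (v i))
    (hindep : iIndepFun v μ) {j : Fin n} (hj : j ∉ J) (t T : ℝ) (k : ℕ) :
    μ.real (allLE v (insert j J) t ∩ manyAbove v (insert j J) T (k + 1)) =
      μ.real (v j ⁻¹' (Iic t ∩ Ioi T)) * μ.real (allLE v J t ∩ manyAbove v J T k) +
        μ.real (v j ⁻¹' (Iic t \ Ioi T)) * μ.real (allLE v J t ∩ manyAbove v J T (k + 1)) := by
  have hdisj : Disjoint (v j ⁻¹' (Iic t ∩ Ioi T)) (v j ⁻¹' (Iic t \ Ioi T)) :=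
    (disjoint_sdiff_inter.symm.mono_left (by rw [Set.inter_comm])).preimage (v j)
  have hC := measurableSet_allLE (v := v) (J := J) t
  rw [allLE_inter_manyAbove_insert_succ hj, measureReal_union
      (hdisj.mono inter_subset_left inter_subset_left)
      ((hmeas j (measurableSet_Iic.diff measurableSet_Ioi)).inter
        (sigmaGen_le hmeas _ (hC.inter (measurableSet_manyAbove T _)))),
    measureReal_preimage_inter_eq_mul hmeas hindep hj (measurableSet_Iic.inter measurableSet_Ioi)
      (hC.inter (measurableSet_manyAbove T k)),
    measureReal_preimage_inter_eq_mul hmeas hindep hj (measurableSet_Iic.diff measurableSet_Ioi)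
      (hC.inter (measurableSet_manyAbove T (k + 1)))]

/-- Harris's inequality: `allLE` is a decreasing and `manyAbove` an increasing event. -/
lemma measureReal_allLE_inter_manyAbove_le (hmeas : ∀ i, Measurable (v i))
    (hindep : iIndepFun v μ) (t T : ℝ) (J : Finset (Fin n)) (k : ℕ) :
    μ.real (allLE v J t ∩ manyAbove v J T k) ≤
      μ.real (allLE v J t) * μ.real (manyAbove v J T k) := by
  induction J using Finset.induction_on generalizing k with
  | empty => cases k <;> simp [manyAbove_zero, manyAbove_empty_succ]
  | insert j J hj ih =>
    cases k with
    | zero => simp [manyAbove_zero]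
    | succ k =>
      have hσ : μ.real (v j ⁻¹' (Iic t ∩ Ioi T)) + μ.real (v j ⁻¹' (Iic t \ Ioi T)) =
          μ.real (v j ⁻¹' Iic t) := by
        rw [Set.preimage_inter, Set.preimage_sdiff]
        exact measureReal_inter_add_sdiff (hmeas j measurableSet_Ioi)
      have hone := measureReal_Iic_inter_Ioi_le (μ := μ) (hmeas j) t T
      rw [← Set.preimage_inter] at hone
      have hmono : 0 ≤ μ.real (manyAbove v J T k) - μ.real (manyAbove v J T (k + 1)) :=
        sub_nonneg.2 (measureReal_mono (manyAbove_succ_subset T k))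
      rw [measureReal_allLE_inter_manyAbove_insert_succ hmeas hindep hj,
        measureReal_allLE_insert hmeas hindep hj, measureReal_manyAbove_insert_succ hmeas hindep hj]
      set a := μ.real (v j ⁻¹' (Iic t ∩ Ioi T))
      set c := μ.real (allLE v J t)
      set b := μ.real (manyAbove v J T k)
      set b' := μ.real (manyAbove v J T (k + 1))
      calc a * μ.real (allLE v J t ∩ manyAbove v J T k) +
            μ.real (v j ⁻¹' (Iic t \ Ioi T)) * μ.real (allLE v J t ∩ manyAbove v J T (k + 1))
          ≤ a * (c * b) + μ.real (v j ⁻¹' (Iic t \ Ioi T)) * (c * b') := by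
            gcongr <;> exact ih _
        _ = c * (μ.real (v j ⁻¹' Iic t) * b' + a * (b - b')) := by rw [← hσ]; ring
        _ ≤ c * (μ.real (v j ⁻¹' Iic t) * b' +
              μ.real (v j ⁻¹' Iic t) * μ.real (v j ⁻¹' Ioi T) * (b - b')) := by gcongr
        _ = _ := by ring

lemma measureReal_allLE_eq_prod (hmeas : ∀ i, Measurable (v i)) (hindep : iIndepFun v μ)
    (t : ℝ) (J : Finset (Fin n)) :
    μ.real (allLE v J t) = ∏ l ∈ J, (1 - μ.real (v l ⁻¹' Ioi t)) := by
  induction J using Finset.induction_on with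
  | empty => simp [allLE]
  | insert j J hj ih =>
    rw [measureReal_allLE_insert hmeas hindep hj, ih, prod_insert hj,
      measureReal_preimage_Iic (hmeas j)]

-- The Chernoff bound `P(N ≥ k) ≤ (2/3)^k E[(3/2)^N]` for `N = #{l ∈ J | T < v l}`.
lemma measureReal_manyAbove_le_prod (hmeas : ∀ i, Measurable (v i)) (hindep : iIndepFun v μ)
    (T : ℝ) (J : Finset (Fin n)) (k : ℕ) :
    μ.real (manyAbove v J T k) ≤ (2 / 3) ^ k * ∏ l ∈ J, (1 + μ.real (v l ⁻¹' Ioi T) / 2) := by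
  induction J using Finset.induction_on generalizing k with
  | empty =>
    cases k with
    | zero => simp [manyAbove_zero]
    | succ k => simp only [manyAbove_empty_succ, measureReal_empty]; positivity
  | insert j J hj ih =>
    cases k with
    | zero =>
      simpa [manyAbove_zero] using one_le_prod fun l _ =>
        le_add_of_nonneg_right (div_nonneg (measureReal_nonneg (μ := μ)) zero_le_two)
    | succ k =>
      rw [measureReal_manyAbove_insert_succ hmeas hindep hj, prod_insert hj]
      have hp : 0 ≤ 1 - μ.real (v j ⁻¹' Ioi T) := sub_nonneg.2 measureReal_le_one
      calc μ.real (v j ⁻¹' Ioi T) * μ.real (manyAbove v J T k) +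
            (1 - μ.real (v j ⁻¹' Ioi T)) * μ.real (manyAbove v J T (k + 1))
          ≤ μ.real (v j ⁻¹' Ioi T) * ((2 / 3) ^ k * ∏ l ∈ J, (1 + μ.real (v l ⁻¹' Ioi T) / 2)) +
            (1 - μ.real (v j ⁻¹' Ioi T)) *
              ((2 / 3) ^ (k + 1) * ∏ l ∈ J, (1 + μ.real (v l ⁻¹' Ioi T) / 2)) := by
            gcongr
            exacts [ih k, ih (k + 1)]
        _ = _ := by ring

lemma measureReal_manyAbove_le (hmeas : ∀ i, Measurable (v i)) (hindep : iIndepFun v μ)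
    {k : ℕ} (hk : 1 ≤ k) {T : ℝ} (hq : μ.real (allLE v univ T) = (2 / 3) ^ (k - 1))
    (J : Finset (Fin n)) :
    μ.real (manyAbove v J T k) ≤ 3 / 2 * Real.exp (-k / 6) := by
  set P := ∏ l, (1 + μ.real (v l ⁻¹' Ioi T) / 2)
  have hb : μ.real (manyAbove v J T k) ≤ (2 / 3) ^ k * P :=
    (measureReal_mono (manyAbove_mono (subset_univ J) T k)).trans
      (measureReal_manyAbove_le_prod hmeas hindep T univ k)
  have hP : P ^ 2 * (2 / 3) ^ (k - 1) ≤ 1 := by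
    rw [← hq, measureReal_allLE_eq_prod hmeas hindep]
    exact prod_one_add_half_sq_mul_prod_one_sub_le_one _ (fun _ _ => measureReal_nonneg)
      fun _ _ => measureReal_le_one
  have hpow : (2 / 3 : ℝ) ^ k = (2 / 3) ^ (k - 1) * (2 / 3) := (pow_sub_one_mul (by omega) _).symm
  refine (pow_le_pow_iff_left₀ measureReal_nonneg (by positivity) two_ne_zero).1 ?_
  calc μ.real (manyAbove v J T k) ^ 2 ≤ ((2 / 3) ^ k * P) ^ 2 := by gcongr
    _ = (2 / 3) ^ (k + 1) * (P ^ 2 * (2 / 3) ^ (k - 1)) := by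
      rw [pow_succ (2 / 3 : ℝ) k, hpow]; ring
    _ ≤ (2 / 3) ^ k * (2 / 3) := by rw [← pow_succ]; exact mul_le_of_le_one_right (by positivity) hP
    _ ≤ Real.exp (-k / 3) * (9 / 4) :=
        mul_le_mul (two_thirds_pow_le_exp k) (by norm_num) (by norm_num) (Real.exp_pos _).le
    _ = (3 / 2 * Real.exp (-k / 6)) ^ 2 := by rw [mul_pow, sq (Real.exp _), ← Real.exp_add]; ring_nf

lemma measureReal_firstAbove_inter_manyAbove_le (hmeas : ∀ i, Measurable (v i))
    (hindep : iIndepFun v μ) (t T : ℝ) (k : ℕ) (j : Fin n) :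
    μ.real (firstAbove v t j ∩ manyAbove v (Finset.Iio j) T k) ≤
      μ.real (firstAbove v t j) * μ.real (manyAbove v (Finset.Iio j) T k) := by
  have hj : j ∉ Finset.Iio j := by simp
  rw [firstAbove, Set.inter_assoc,
    measureReal_preimage_inter_eq_mul hmeas hindep hj measurableSet_Ioi
      ((measurableSet_allLE t).inter (measurableSet_manyAbove T k)),
    measureReal_preimage_inter_eq_mul hmeas hindep hj measurableSet_Ioi (measurableSet_allLE t),
    mul_assoc]
  gcongr
  exact measureReal_allLE_inter_manyAbove_le hmeas hindep t T _ k

lemma measureReal_lt_maxVal_univ_le (hmeas : ∀ i, Measurable (v i)) (hindep : iIndepFun v μ)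
    {k : ℕ} {T t δ : ℝ} (ht : 0 ≤ t) (hTt : T ≤ t)
    (hδ : ∀ J, μ.real (manyAbove v J T k) ≤ δ) :
    μ.real {ω | t < maxVal univ (v · ω)} ≤
      μ.real {ω | t < maxVal (acceptSet k T (v · ω)) (v · ω)} +
        δ * μ.real {ω | t < maxVal univ (v · ω)} := by
  set F := firstAbove v t
  set B := fun j => manyAbove v (Finset.Iio j) T k
  have hF := measurableSet_firstAbove hmeas t
  have hB : ∀ j, MeasurableSet (B j) := fun j => sigmaGen_le hmeas _ (measurableSet_manyAbove T k)
  have hM : μ.real {ω | t < maxVal univ (v · ω)} = ∑ j, μ.real (F j) := by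
    rw [← iUnion_firstAbove ht, measureReal_iUnion_fintype (pairwise_disjoint_firstAbove t) hF]
  have hA : ∑ j, μ.real (F j \ B j) ≤ μ.real {ω | t < maxVal (acceptSet k T (v · ω)) (v · ω)} := by
    rw [← measureReal_iUnion_fintype
      ((pairwise_disjoint_firstAbove t).mono fun _ _ h => h.mono Set.sdiff_subset Set.sdiff_subset)
      fun j => (hF j).diff (hB j)]
    exact measureReal_mono (Set.iUnion_subset (firstAbove_diff_manyAbove_subset hTt))
  have hFB : ∀ j, μ.real (F j ∩ B j) ≤ δ * μ.real (F j) := fun j =>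
    (measureReal_firstAbove_inter_manyAbove_le hmeas hindep t T k j).trans
      (by rw [mul_comm]; gcongr; exact hδ _)
  calc μ.real {ω | t < maxVal univ (v · ω)} = ∑ j, μ.real (F j) := hM
    _ = ∑ j, μ.real (F j \ B j) + ∑ j, μ.real (F j ∩ B j) := by
      rw [← sum_add_distrib]
      exact sum_congr rfl fun j _ => (measureReal_sdiff_add_inter (hB j)).symm
    _ ≤ μ.real {ω | t < maxVal (acceptSet k T (v · ω)) (v · ω)} + ∑ j, δ * μ.real (F j) :=
      add_le_add hA (sum_le_sum fun j _ => hFB j)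
    _ = _ := by rw [← mul_sum, hM]

lemma one_sub_mul_measureReal_lt_maxVal_univ_le (hmeas : ∀ i, Measurable (v i))
    (hindep : iIndepFun v μ) {k : ℕ} (hk : 1 ≤ k) {T δ : ℝ}
    (hδ : ∀ J, μ.real (manyAbove v J T k) ≤ δ) (hqδ : μ.real (allLE v univ T) ≤ δ)
    {t : ℝ} (ht : 0 < t) :
    (1 - δ) * μ.real {ω | t < maxVal univ (v · ω)} ≤
      μ.real {ω | t < maxVal (acceptSet k T (v · ω)) (v · ω)} := by
  rcases le_or_gt t T with htT | hTt
  · have hE : 1 - μ.real (allLE v univ T) ≤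
        μ.real {ω | t < maxVal (acceptSet k T (v · ω)) (v · ω)} := by
      rw [← probReal_compl_eq_one_sub (sigmaGen_le hmeas _ (measurableSet_allLE T))]
      exact measureReal_mono ((compl_allLE_subset hk T).trans fun _ h => htT.trans_lt h)
    have h0 : 0 ≤ μ.real {ω | t < maxVal univ (v · ω)} := measureReal_nonneg
    have h1 : μ.real {ω | t < maxVal univ (v · ω)} ≤ 1 := measureReal_le_one
    have h2 : 0 ≤ μ.real {ω | t < maxVal (acceptSet k T (v · ω)) (v · ω)} := measureReal_nonneg
    rcases le_total δ 1 with hδ1 | hδ1 <;> nlinarith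
  · linarith [measureReal_lt_maxVal_univ_le hmeas hindep ht.le hTt.le hδ]

end AlgMax

open AlgMax in
theorem alg_max_prophet_general {Ω : Type*} [MeasurableSpace Ω] (μ : Measure Ω)
    [IsProbabilityMeasure μ]
    (n k : ℕ) (hk : 1 ≤ k)
    (v : Fin n → Ω → ℝ)
    (hmeas : ∀ i, Measurable (v i)) (hnonneg : ∀ i ω, 0 ≤ v i ω)
    (hindep : iIndepFun v μ)
    (hatomless : ∀ i (x : ℝ), μ {ω | v i ω = x} = 0)
    (T : ℝ)
    (hT : μ {ω | ∀ i, v i ω < T} = ENNReal.ofReal ((2 / 3 : ℝ) ^ (k - 1))) :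
    (1 - (3 / 2) * Real.exp (-(k : ℝ) / 6)) * ∫ ω, maxVal Finset.univ (fun i => v i ω) ∂μ ≤
      ∫ ω, maxVal (acceptSet k T (fun i => v i ω)) (fun i => v i ω) ∂μ := by
  have hq : μ.real (allLE v univ T) = (2 / 3) ^ (k - 1) := by
    rw [measureReal_def, measure_allLE_univ_eq_of_atomless hatomless, hT,
      ENNReal.toReal_ofReal (by positivity)]
  have hM0 : ∀ ω, 0 ≤ maxVal univ (v · ω) := fun ω => maxVal_nonneg (hnonneg · ω)
  have hA0 : ∀ ω, 0 ≤ maxVal (acceptSet k T (v · ω)) (v · ω) := fun ω => maxVal_nonneg (hnonneg · ω)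
  by_cases hMi : Integrable (fun ω => maxVal univ (v · ω)) μ
  · refine mul_integral_le_integral_of_measureReal_lt hM0 (measurable_maxVal hmeas).aemeasurable
      hA0 ?_ fun t ht => one_sub_mul_measureReal_lt_maxVal_univ_le hmeas hindep hk
        (measureReal_manyAbove_le hmeas hindep hk hq)
        (hq.trans_le (two_thirds_pow_sub_one_le hk)) ht
    refine hMi.mono' (measurable_maxVal_acceptSet hmeas hnonneg k T).aestronglyMeasurable
      (ae_of_all _ fun ω => ?_)
    rw [Real.norm_of_nonneg (hA0 ω)]
    exact maxVal_mono (subset_univ _) (hnonneg · ω)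
  · rw [integral_undef hMi, mul_zero]
    exact integral_nonneg hA0

/-- **Performance of `ALG_max` (Theorem 2.5 of Ezra–Feldman–Nehama).**
Let `k ≥ 1` and let `v₁,…,vₙ` be independent nonnegative random variables with atomless
distributions.  If `T` satisfies `Pr[max_i vᵢ < T] = (2/3)^{k−1}` and `S` consists of the
first at most `k` indices `i` with `vᵢ > T`, then
`E[max_{i∈S} vᵢ] ≥ (1 − (3/2)·e^{−k/6}) · E[max_i vᵢ]`. -/
theorem alg_max_prophet {Ω : Type*} [MeasurableSpace Ω] (μ : Measure Ω)
    [IsProbabilityMeasure μ]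
    (n k : ℕ) (hn : 0 < n) (hk : 1 ≤ k)
    (v : Fin n → Ω → ℝ)
    (hmeas : ∀ i, Measurable (v i)) (hnonneg : ∀ i ω, 0 ≤ v i ω)
    (hindep : iIndepFun v μ)
    (hatomless : ∀ i (x : ℝ), μ {ω | v i ω = x} = 0)
    (T : ℝ)
    (hT : μ {ω | ∀ i, v i ω < T} = ENNReal.ofReal ((2 / 3 : ℝ) ^ (k - 1))) :
    (1 - (3 / 2) * Real.exp (-(k : ℝ) / 6)) * ∫ ω, maxVal Finset.univ (fun i => v i ω) ∂μ ≤
      ∫ ω, maxVal (acceptSet k T (fun i => v i ω)) (fun i => v i ω) ∂μ :=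
  alg_max_prophet_general μ n k hk v hmeas hnonneg hindep hatomless T hT
end

section
/- Let n ≥ 1 and k ≥ 1 be integers and let x_1,…,x_n ∈ [0,1] satisfy ∏_{j=1}^n x_j ≥ (2/3)^{k−1}. Then Σ_{j=1}^n (1 − x_j) ≤ k/2. -/
/-- **Key estimate for the threshold of `ALG_max`.**
If `x₁,…,xₙ ∈ [0,1]` satisfy `∏ⱼ xⱼ ≥ (2/3)^{k−1}` (with `n, k ≥ 1`), then
`∑ⱼ (1 − xⱼ) ≤ k/2`. -/
theorem sum_one_sub_le_of_prod_ge (n k : ℕ) (hn : 1 ≤ n) (hk : 1 ≤ k)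
    (x : Fin n → ℝ) (hx : ∀ j, x j ∈ Set.Icc (0 : ℝ) 1)
    (hprod : (2 / 3 : ℝ) ^ (k - 1) ≤ ∏ j, x j) :
    ∑ j, (1 - x j) ≤ (k : ℝ) / 2 := by
  have hxpos : ∀ j, 0 < x j := by
    intro j
    rcases lt_or_eq_of_le (hx j).1 with h | h
    · exact h
    · exfalso
      have : (∏ i, x i) = 0 := Finset.prod_eq_zero (Finset.mem_univ j) h.symm
      have hp : (0 : ℝ) < (2 / 3 : ℝ) ^ (k - 1) := by positivity
      linarith [hprod, this ▸ hprod]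
  -- step 1: ∑ (1 - x j) ≤ -log (∏ x j)
  have h1 : ∑ j, (1 - x j) ≤ ∑ j, (-Real.log (x j)) := by
    apply Finset.sum_le_sum
    intro j _
    have := Real.log_le_sub_one_of_pos (hxpos j)
    linarith
  have h2 : ∑ j, (-Real.log (x j)) = -Real.log (∏ j, x j) := by
    rw [Finset.sum_neg_distrib, ← Real.log_prod]
    intro j _; exact (hxpos j).ne'
  -- step 2: -log (∏ x j) ≤ (k-1) * log (3/2)
  have hlog : Real.log (∏ j, x j) ≥ Real.log ((2 / 3 : ℝ) ^ (k - 1)) :=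
    Real.log_le_log (by positivity) hprod
  have h3 : Real.log ((2 / 3 : ℝ) ^ (k - 1)) = -((k - 1 : ℕ) * Real.log (3 / 2)) := by
    rw [Real.log_pow]
    have : Real.log (2 / 3 : ℝ) = -Real.log (3 / 2) := by
      rw [← Real.log_inv]; norm_num
    rw [this]; ring
  -- step 3: log (3/2) ≤ 1/2
  have h4 : Real.log (3 / 2 : ℝ) ≤ 1 / 2 := by
    have := Real.add_one_le_exp (1 / 2 : ℝ)
    have h := Real.log_le_log (by norm_num : (0:ℝ) < 3/2)
      (by linarith : (3/2 : ℝ) ≤ Real.exp (1/2))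
    rwa [Real.log_exp] at h
  have hk1 : ((k - 1 : ℕ) : ℝ) = (k : ℝ) - 1 := by
    have : (1 : ℕ) ≤ k := hk
    push_cast [this]; ring
  have hkn : (0 : ℝ) ≤ ((k - 1 : ℕ) : ℝ) := Nat.cast_nonneg _
  calc ∑ j, (1 - x j) ≤ -Real.log (∏ j, x j) := h2 ▸ h1
    _ ≤ ((k - 1 : ℕ) : ℝ) * Real.log (3 / 2) := by
        rw [h3] at hlog; linarith
    _ ≤ ((k - 1 : ℕ) : ℝ) * (1 / 2) := by
        exact mul_le_mul_of_nonneg_left h4 hkn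
    _ ≤ (k : ℝ) / 2 := by rw [hk1]; nlinarith [(Nat.one_le_cast (α := ℝ)).mpr hk]
end

section
/- Fix integers 1 ≤ ℓ ≤ k and n ≥ k + 1. Let v_1,…,v_n be independent random variables where, for 1 ≤ i ≤ k+1, v_i takes the value x_i = i(2k−i+3)/2 with probability 1/x_i and the value 0 otherwise, and v_i = 0 almost surely for i > k+1. Then for every randomized online algorithm A with capacity k (with u an independent uniform seed), E[TOP_ℓ(A(u,v); v)] ≤ (1 − 1/(2k+2)!) · E[TOP_ℓ(v)]. -/
/-!
Fix a seed `u`. On the input `w` with values `x_1 < ⋯ < x_{k+1}` followed by zeros the algorithm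
keeps at most `k` indices, so it skips some `i ≤ k + 1`. The input that agrees with `w` up to `i`
and vanishes afterwards looks the same to an online algorithm up to time `i`, so `i` is skipped
there too; as `x_i` exceeds every earlier `x_j` by at least `1`, the algorithm loses at least `1`
against the prophet. That input occurs with probability at least `∏ 1/x_j = 2^(k+1)/(2k+2)!`,
whereas `E[TOP_ℓ(v)] ≤ E[∑ v_i] = k + 1 ≤ 2^(k+1)`.
-/

open MeasureTheory ProbabilityTheory Finset

/-- A randomized online algorithm with capacity `k`: it receives a uniform random seed
`u ∈ [0,1]` and an online value vector `v`, outputs a set of at most `k` indices, is online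
in `v` (the decision about index `i` depends only on `v₁,…,vᵢ`), and is measurable. -/
structure OnlineAlg (n k : ℕ) where
  run : ℝ → (Fin n → ℝ) → Finset (Fin n)
  card_le : ∀ u v, (run u v).card ≤ k
  online : ∀ u v w (i : Fin n), (∀ j : Fin n, j ≤ i → v j = w j) →
    (i ∈ run u v ↔ i ∈ run u w)
  meas : ∀ i : Fin n, MeasurableSet {p : ℝ × (Fin n → ℝ) | i ∈ run p.1 p.2}

/-- The value `xᵢ = i(2k−i+3)/2` (for the 1-based index `i = (i : ℕ) + 1` of `i : Fin n`). -/
noncomputable def hardValue (k : ℕ) {n : ℕ} (i : Fin n) : ℝ :=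
  (((i : ℕ) : ℝ) + 1) * (2 * (k : ℝ) - (((i : ℕ) : ℝ) + 1) + 3) / 2

open scoped Nat ENNReal

namespace TOPval

variable {n ℓ : ℕ}

lemma sum_le {A B : Finset (Fin n)} {v : Fin n → ℝ} (hBA : B ⊆ A) (hB : #B ≤ ℓ) :
    ∑ i ∈ B, v i ≤ TOPval ℓ A v := by
  unfold TOPval
  apply le_max'
  exact mem_image_of_mem _ (mem_filter.2 ⟨mem_powerset.2 hBA, hB⟩)

lemma exists_eq_sum (ℓ : ℕ) (A : Finset (Fin n)) (v : Fin n → ℝ) :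
    ∃ B ⊆ A, #B ≤ ℓ ∧ TOPval ℓ A v = ∑ i ∈ B, v i := by
  obtain ⟨B, hB, hsum⟩ := mem_image.1 (max'_mem _ _ : TOPval ℓ A v ∈ _)
  rw [mem_filter, mem_powerset] at hB
  exact ⟨B, hB.1, hB.2, hsum.symm⟩

lemma nonneg (A : Finset (Fin n)) (v : Fin n → ℝ) : 0 ≤ TOPval ℓ A v := by
  simpa using sum_le (v := v) (empty_subset A) (Nat.zero_le ℓ)

lemma mono {A A' : Finset (Fin n)} (v : Fin n → ℝ) (h : A ⊆ A') : TOPval ℓ A v ≤ TOPval ℓ A' v := by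
  obtain ⟨B, hBA, hB, hrep⟩ := exists_eq_sum ℓ A v
  exact hrep ▸ sum_le (hBA.trans h) hB

lemma le_sum {A : Finset (Fin n)} {v : Fin n → ℝ} (hv : ∀ i, 0 ≤ v i) :
    TOPval ℓ A v ≤ ∑ i, v i := by
  obtain ⟨B, -, -, hrep⟩ := exists_eq_sum ℓ A v
  exact hrep ▸ sum_le_sum_of_subset_of_nonneg (subset_univ B) fun i _ _ => hv i

lemma add_one_le_of_notMem {S : Finset (Fin n)} {v : Fin n → ℝ} {i : Fin n} (hℓ : 1 ≤ ℓ)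
    (hiS : i ∉ S) (hvi : 1 ≤ v i) (hgap : ∀ j, j ≠ i → v j + 1 ≤ v i) :
    TOPval ℓ S v + 1 ≤ TOPval ℓ univ v := by
  obtain ⟨B, hBS, hB, hrep⟩ := exists_eq_sum ℓ S v
  have hiB : i ∉ B := fun h => hiS (hBS h)
  rw [hrep]
  rcases B.eq_empty_or_nonempty with rfl | ⟨j, hjB⟩
  · have := sum_le (v := v) (subset_univ {i}) (by simpa using hℓ)
    simp only [sum_singleton, sum_empty] at this ⊢
    linarith
  · have hswap : ∑ x ∈ insert i (B.erase j), v x = ∑ x ∈ B, v x - v j + v i := by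
      rw [sum_insert fun h => hiB (mem_of_mem_erase h), sum_erase_eq_sub hjB]; ring
    have hcard : #(insert i (B.erase j)) ≤ ℓ :=
      (card_insert_le _ _).trans (by rw [card_erase_of_mem hjB]; have := card_pos.2 ⟨j, hjB⟩; omega)
    have := sum_le (v := v) (subset_univ _) hcard
    linarith [hgap j fun h => hiB (h ▸ hjB)]

lemma measurable (ℓ : ℕ) (A : Finset (Fin n)) : Measurable (TOPval ℓ A) := by
  have hne : (A.powerset.filter fun B => #B ≤ ℓ).Nonempty := ⟨∅, by simp⟩
  have : TOPval ℓ A = (A.powerset.filter fun B => #B ≤ ℓ).sup' hne fun B v => ∑ i ∈ B, v i := by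
    funext v
    rw [TOPval, max'_eq_sup', sup'_image, Finset.sup'_apply]
    rfl
  rw [this]
  exact measurable_sup' hne fun B _ => Finset.measurable_sum B fun i _ => measurable_pi_apply i

end TOPval

section HardValue

variable {n k : ℕ}

lemma one_le_hardValue {i : Fin n} (hi : (i : ℕ) < k + 1) : 1 ≤ hardValue k i := by
  have hik : ((i : ℕ) : ℝ) ≤ k := by exact_mod_cast Nat.lt_succ_iff.1 hi
  have : (0 : ℝ) ≤ (i : ℕ) := Nat.cast_nonneg _
  unfold hardValue
  nlinarith

lemma two_le_hardValue {i : Fin n} (hi0 : 0 < (i : ℕ)) (hi : (i : ℕ) < k + 1) :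
    2 ≤ hardValue k i := by
  have hik : ((i : ℕ) : ℝ) ≤ k := by exact_mod_cast Nat.lt_succ_iff.1 hi
  have : (1 : ℝ) ≤ (i : ℕ) := by exact_mod_cast hi0
  unfold hardValue
  nlinarith

lemma hardValue_add_one_le {i j : Fin n} (hji : (j : ℕ) < i) (hi : (i : ℕ) < k + 1) :
    hardValue k j + 1 ≤ hardValue k i := by
  have hji' : ((j : ℕ) : ℝ) + 1 ≤ (i : ℕ) := by exact_mod_cast hji
  have hik : ((i : ℕ) : ℝ) ≤ k := by exact_mod_cast Nat.lt_succ_iff.1 hi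
  have : (0 : ℝ) ≤ (j : ℕ) := Nat.cast_nonneg _
  unfold hardValue
  nlinarith

-- The factors `m + 1` and `2k + 2 - m` run over `1, …, k + 1` and `k + 2, …, 2k + 2`.
lemma Nat.prod_range_succ_mul_sub_eq_factorial (k : ℕ) :
    ∏ m ∈ range (k + 1), (m + 1) * (2 * k + 2 - m) = (2 * k + 2)! := by
  rw [prod_mul_distrib, prod_range_add_one_eq_factorial, ← Nat.descFactorial_eq_prod_range,
    ← Nat.factorial_mul_descFactorial (by omega : k + 1 ≤ 2 * k + 2)]
  congr 2
  omega

lemma prod_range_hardValue (k : ℕ) :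
    ∏ m ∈ range (k + 1), ((m : ℝ) + 1) * (2 * k - (m + 1) + 3) / 2 =
      (2 * k + 2)! / 2 ^ (k + 1) := by
  have hterm : ∀ m ∈ range (k + 1),
      ((m : ℝ) + 1) * (2 * k - (m + 1) + 3) / 2 = (((m + 1) * (2 * k + 2 - m) : ℕ) : ℝ) / 2 := by
    intro m hm
    rw [Nat.cast_mul, Nat.cast_sub (by rw [mem_range] at hm; omega)]
    push_cast
    ring
  rw [prod_congr rfl hterm, prod_div_distrib, prod_const, card_range, ← Nat.cast_prod,
    Nat.prod_range_succ_mul_sub_eq_factorial]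

lemma prod_ite_one_div_hardValue (hn : k + 1 ≤ n) :
    ∏ j : Fin n, (if (j : ℕ) < k + 1 then 1 / hardValue k j else 1) =
      2 ^ (k + 1) / (2 * k + 2)! := by
  unfold hardValue
  rw [Fin.prod_univ_eq_prod_range
      (fun m => if m < k + 1 then 1 / (((m : ℝ) + 1) * (2 * k - (m + 1) + 3) / 2) else 1) n,
    ← prod_subset (range_subset_range.2 hn) fun m _ hm => if_neg (by simpa using hm),
    prod_congr rfl fun m hm => if_pos (mem_range.1 hm), prod_div_distrib, prod_const_one,
    prod_range_hardValue, one_div_div]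

end HardValue

noncomputable def hardInput (k : ℕ) {n : ℕ} (i : Fin n) : Fin n → ℝ :=
  fun j => if j ≤ i then hardValue k j else 0

lemma hardInput_add_one_le {k n : ℕ} {i j : Fin n} (hi : (i : ℕ) < k + 1) (hji : j ≠ i) :
    hardInput k i j + 1 ≤ hardInput k i i := by
  have := one_le_hardValue hi
  simp only [hardInput, le_refl, if_true]
  split_ifs with hj
  · exact hardValue_add_one_le (lt_of_le_of_ne hj (Fin.val_ne_of_ne hji)) hi
  · linarith

lemma TOPval_run_hardInput_add_one_le {n k ℓ : ℕ} (A : OnlineAlg n k) (hℓ : 1 ≤ ℓ) {i i' : Fin n}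
    (hii' : i ≤ i') (hi : (i : ℕ) < k + 1) {u : ℝ} (hu : i ∉ A.run u (hardInput k i')) :
    TOPval ℓ (A.run u (hardInput k i)) (hardInput k i) + 1 ≤ TOPval ℓ univ (hardInput k i) := by
  have hskip : i ∉ A.run u (hardInput k i) := by
    rwa [A.online u _ (hardInput k i') i fun j hj => by simp [hardInput, hj, hj.trans hii']]
  refine TOPval.add_one_le_of_notMem hℓ hskip ?_ fun j hj => hardInput_add_one_le hi hj
  simpa [hardInput] using one_le_hardValue hi

lemma Fin.exists_lt_notMem_of_card_le {n k : ℕ} (hn : k + 1 ≤ n) {R : Finset (Fin n)}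
    (hR : #R ≤ k) : ∃ i : Fin n, (i : ℕ) < k + 1 ∧ i ∉ R := by
  obtain ⟨i, hi, hiR⟩ := exists_mem_notMem_of_card_lt_card (s := R)
    (t := univ.map (Fin.castLEEmb hn)) (by rw [card_map, card_univ, Fintype.card_fin]; omega)
  obtain ⟨m, -, rfl⟩ := mem_map.1 hi
  exact ⟨_, m.isLt, hiR⟩

section MeasureLemmas

variable {α β : Type*} [MeasurableSpace α] [MeasurableSpace β]

lemma le_prod_iUnion_prod {ι : Type*} [Countable ι] {μ : Measure α} [IsProbabilityMeasure μ]
    {ν : Measure β} [SFinite ν] {s : ι → Set α} {t : ι → Set β} {c : ℝ≥0∞}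
    (hs : ∀ i, MeasurableSet (s i)) (ht : ∀ i, MeasurableSet (t i))
    (hcover : ∀ a, ∃ i, a ∈ s i ∧ c ≤ ν (t i)) :
    c ≤ μ.prod ν (⋃ i, s i ×ˢ t i) := by
  rw [Measure.prod_apply (MeasurableSet.iUnion fun i => (hs i).prod (ht i))]
  calc c = ∫⁻ _, c ∂μ := by simp
    _ ≤ _ := lintegral_mono fun a => by
      obtain ⟨i, hai, hc⟩ := hcover a
      exact hc.trans (measure_mono fun b hb => Set.mem_iUnion.2 ⟨i, hai, hb⟩)

lemma integral_add_measureReal_le {μ : Measure α} [IsFiniteMeasure μ] {f g : α → ℝ} {S : Set α}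
    (hS : MeasurableSet S) (hf : 0 ≤ᵐ[μ] f) (hg : Integrable g μ) (hfg : ∀ a, f a ≤ g a)
    (hfgS : ∀ a ∈ S, f a + 1 ≤ g a) :
    ∫ a, f a ∂μ + μ.real S ≤ ∫ a, g a ∂μ := by
  have hind : Integrable (S.indicator 1) μ := (integrable_const (1 : ℝ)).indicator hS
  have hle : ∫ a, f a ∂μ ≤ ∫ a, g a - S.indicator (1 : α → ℝ) a ∂μ := by
    refine integral_mono_of_nonneg hf (hg.sub hind) (ae_of_all _ fun a => ?_)
    by_cases ha : a ∈ S
    · simpa [ha, le_sub_iff_add_le] using hfgS a ha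
    · simpa [ha] using hfg a
  rw [integral_sub hg hind, integral_indicator_one hS] at hle
  linarith

variable {μ : Measure α} {X : α → ℝ}

lemma ae_eq_const_of_map_eq_dirac (hX : Measurable X) {c : ℝ} (h : μ.map X = Measure.dirac c) :
    X =ᵐ[μ] fun _ => c :=
  (ae_map_iff hX.aemeasurable (measurableSet_singleton c)).1
    (h ▸ (ae_dirac_iff (measurableSet_singleton c)).2 rfl)

variable {p q : ℝ≥0∞} {x : ℝ}

lemma integrable_of_map_eq_smul_dirac_add_smul_dirac (hX : Measurable X) (hp : p ≠ ∞)
    (hq : q ≠ ∞) (h : μ.map X = p • Measure.dirac x + q • Measure.dirac 0) : Integrable X μ := by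
  refine (integrable_map_measure aestronglyMeasurable_id hX.aemeasurable).1 ?_
  rw [h]
  exact ((integrable_dirac (by simp)).smul_measure hp).add_measure
    ((integrable_dirac (by simp)).smul_measure hq)

lemma integral_eq_of_map_eq_smul_dirac_add_smul_dirac (hX : Measurable X) (hp : p ≠ ∞)
    (hq : q ≠ ∞) (h : μ.map X = p • Measure.dirac x + q • Measure.dirac 0) :
    ∫ a, X a ∂μ = p.toReal * x := by
  have hint : ∀ (r : ℝ≥0∞) (y : ℝ), r ≠ ∞ → Integrable id (r • Measure.dirac y) :=
    fun r y hr => (integrable_dirac (by simp)).smul_measure hr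
  change ∫ a, id (X a) ∂μ = _
  rw [← integral_map hX.aemeasurable aestronglyMeasurable_id, h,
    integral_add_measure (hint p x hp) (hint q 0 hq), integral_smul_measure, integral_smul_measure,
    integral_dirac, integral_dirac]
  simp

lemma ae_nonneg_of_map_eq_smul_dirac_add_smul_dirac (hX : Measurable X) (hx : 0 ≤ x)
    (h : μ.map X = p • Measure.dirac x + q • Measure.dirac 0) : 0 ≤ᵐ[μ] X := by
  refine (ae_map_iff hX.aemeasurable (measurableSet_le measurable_const measurable_id)).1 ?_
  rw [h]
  have hnonneg : ∀ y : ℝ, 0 ≤ y → ∀ᵐ z ∂Measure.dirac y, 0 ≤ z :=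
    fun y hy => (ae_dirac_iff (measurableSet_le measurable_const measurable_id)).2 hy
  exact ae_add_measure_iff.2 ⟨Measure.ae_smul_measure (hnonneg x hx) p,
    Measure.ae_smul_measure (hnonneg 0 le_rfl) q⟩

end MeasureLemmas

structure IsHardInstance {Ω : Type*} [MeasurableSpace Ω] (μ : Measure Ω) {n : ℕ} (k : ℕ)
    (v : Fin n → Ω → ℝ) : Prop where
  measurable : ∀ i, Measurable (v i)
  map_eq : ∀ i : Fin n, (i : ℕ) < k + 1 →
    μ.map (v i) =
      ENNReal.ofReal (1 / hardValue k i) • Measure.dirac (hardValue k i) +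
        ENNReal.ofReal (1 - 1 / hardValue k i) • Measure.dirac (0 : ℝ)
  map_eq_dirac_zero : ∀ i : Fin n, k + 1 ≤ (i : ℕ) → μ.map (v i) = Measure.dirac (0 : ℝ)

namespace IsHardInstance

variable {Ω : Type*} [MeasurableSpace Ω] {μ : Measure Ω} {n k : ℕ} {v : Fin n → Ω → ℝ}

lemma ae_eq_zero (hv : IsHardInstance μ k v) {j : Fin n} (hj : k + 1 ≤ (j : ℕ)) :
    v j =ᵐ[μ] fun _ => 0 :=
  ae_eq_const_of_map_eq_dirac (hv.measurable j) (hv.map_eq_dirac_zero j hj)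

lemma integrable (hv : IsHardInstance μ k v) (j : Fin n) : Integrable (v j) μ := by
  rcases lt_or_ge (j : ℕ) (k + 1) with hj | hj
  · exact integrable_of_map_eq_smul_dirac_add_smul_dirac (hv.measurable j) ENNReal.ofReal_ne_top
      ENNReal.ofReal_ne_top (hv.map_eq j hj)
  · exact (integrable_zero Ω ℝ μ).congr (hv.ae_eq_zero hj).symm

lemma integral_eq (hv : IsHardInstance μ k v) (j : Fin n) :
    ∫ ω, v j ω ∂μ = if (j : ℕ) < k + 1 then 1 else 0 := by
  rcases lt_or_ge (j : ℕ) (k + 1) with hj | hj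
  · have hx := one_le_hardValue hj
    rw [if_pos hj, integral_eq_of_map_eq_smul_dirac_add_smul_dirac (hv.measurable j)
      ENNReal.ofReal_ne_top ENNReal.ofReal_ne_top (hv.map_eq j hj),
      ENNReal.toReal_ofReal (by positivity)]
    field_simp
  · rw [if_neg (by omega), integral_congr_ae (hv.ae_eq_zero hj), integral_zero]

lemma ae_nonneg (hv : IsHardInstance μ k v) (j : Fin n) : 0 ≤ᵐ[μ] v j := by
  rcases lt_or_ge (j : ℕ) (k + 1) with hj | hj
  · exact ae_nonneg_of_map_eq_smul_dirac_add_smul_dirac (hv.measurable j)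
      (zero_le_one.trans (one_le_hardValue hj)) (hv.map_eq j hj)
  · exact (hv.ae_eq_zero hj).mono fun ω h => h.ge

lemma integrable_TOPval (hv : IsHardInstance μ k v) (ℓ : ℕ) :
    Integrable (fun ω => TOPval ℓ univ fun j => v j ω) μ := by
  refine (integrable_finsetSum univ fun j _ => hv.integrable j).mono'
    ((TOPval.measurable ℓ univ).comp (measurable_pi_lambda _ hv.measurable)).aestronglyMeasurable ?_
  filter_upwards [ae_all_iff.2 hv.ae_nonneg] with ω hω
  rw [Real.norm_of_nonneg (TOPval.nonneg _ _)]
  exact TOPval.le_sum hω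

lemma integral_TOPval_le (hv : IsHardInstance μ k v) (ℓ : ℕ) :
    ∫ ω, TOPval ℓ univ (fun j => v j ω) ∂μ ≤ k + 1 := by
  have hsum : Integrable (fun ω => ∑ j, v j ω) μ :=
    integrable_finsetSum _ fun j _ => hv.integrable j
  calc ∫ ω, TOPval ℓ univ (fun j => v j ω) ∂μ ≤ ∫ ω, ∑ j, v j ω ∂μ :=
        integral_mono_ae (hv.integrable_TOPval ℓ) hsum <| by
          filter_upwards [ae_all_iff.2 hv.ae_nonneg] with ω hω using TOPval.le_sum hω
    _ = #{j : Fin n | (j : ℕ) < k + 1} := by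
        rw [integral_finsetSum _ fun j _ => hv.integrable j]
        simp_rw [hv.integral_eq, sum_boole]
    _ ≤ k + 1 := by
        rw [Fin.card_filter_val_lt]
        exact_mod_cast min_le_right n (k + 1)

lemma measurableSet_eq (hv : IsHardInstance μ k v) (w : Fin n → ℝ) :
    MeasurableSet {ω | (fun j => v j ω) = w} :=
  measurable_pi_lambda _ hv.measurable (measurableSet_singleton w)

lemma ofReal_le_measure_preimage_hardInput (hv : IsHardInstance μ k v) {i : Fin n}
    (hi : (i : ℕ) < k + 1) (j : Fin n) :
    ENNReal.ofReal (if (j : ℕ) < k + 1 then 1 / hardValue k j else 1) ≤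
      μ (v j ⁻¹' {hardInput k i j}) := by
  rw [← Measure.map_apply (hv.measurable j) (measurableSet_singleton _)]
  rcases lt_or_ge (j : ℕ) (k + 1) with hj | hj
  · have hx := one_le_hardValue hj
    rw [if_pos hj, hv.map_eq j hj]
    by_cases hji : j ≤ i
    · simp [hardInput, hji, (by linarith : hardValue k j ≠ 0)]
    · have hx2 := two_le_hardValue (by simp only [not_le] at hji; omega) hj
      refine (ENNReal.ofReal_le_ofReal (?_ : 1 / hardValue k j ≤ 1 - 1 / hardValue k j)).trans_eq ?_
      · linarith [one_div_le_one_div_of_le two_pos hx2]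
      · simp [hardInput, hji, (by linarith : hardValue k j ≠ 0)]
  · have hji : ¬ j ≤ i := by omega
    rw [if_neg (by omega)]
    simp [hardInput, hji, hv.map_eq_dirac_zero j hj]

lemma le_measure_eq_hardInput (hv : IsHardInstance μ k v) (hindep : iIndepFun v μ)
    (hn : k + 1 ≤ n) {i : Fin n} (hi : (i : ℕ) < k + 1) :
    ENNReal.ofReal (2 ^ (k + 1) / (2 * k + 2)!) ≤ μ {ω | (fun j => v j ω) = hardInput k i} := by
  have hset : {ω | (fun j => v j ω) = hardInput k i} = ⋂ j, v j ⁻¹' {hardInput k i j} := by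
    ext ω
    simp [funext_iff]
  rw [hset, hindep.meas_iInter fun j => ⟨{hardInput k i j}, measurableSet_singleton _, rfl⟩,
    ← prod_ite_one_div_hardValue hn, ENNReal.ofReal_prod_of_nonneg fun j _ => ?_]
  · exact prod_le_prod' fun j _ => hv.ofReal_le_measure_preimage_hardInput hi j
  · split_ifs with hj
    · exact one_div_nonneg.2 (zero_le_one.trans (one_le_hardValue hj))
    · exact zero_le_one

end IsHardInstance

lemma le_one_sub_one_div_mul {a b c N : ℝ} (h : a + c ≤ b) (hb : b ≤ N * c) (hN : 0 < N) :
    a ≤ (1 - 1 / N) * b := by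
  have : b / N ≤ c := (div_le_iff₀' hN).2 hb
  rw [sub_mul, one_mul, one_div_mul_eq_div]
  linarith

lemma OnlineAlg.measurableSet_mem_run {n k : ℕ} (A : OnlineAlg n k) (i : Fin n)
    (w : Fin n → ℝ) : MeasurableSet {u | i ∈ A.run u w} :=
  (measurable_id.prodMk measurable_const) (A.meas i)

theorem prophet_impossibility_general {Ω : Type*} [MeasurableSpace Ω] (μ : Measure Ω)
    [IsProbabilityMeasure μ]
    (n k ℓ : ℕ) (hℓ : 1 ≤ ℓ) (hn : k + 1 ≤ n)
    (v : Fin n → Ω → ℝ)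
    (hmeas : ∀ i, Measurable (v i))
    (hindep : iIndepFun v μ)
    (hlaw : ∀ i : Fin n, (i : ℕ) < k + 1 →
      μ.map (v i) =
        ENNReal.ofReal (1 / hardValue k i) • Measure.dirac (hardValue k i) +
          ENNReal.ofReal (1 - 1 / hardValue k i) • Measure.dirac (0 : ℝ))
    (hzero : ∀ i : Fin n, k + 1 ≤ (i : ℕ) → μ.map (v i) = Measure.dirac (0 : ℝ))
    (A : OnlineAlg n k) :
    ∫ p : ℝ × Ω, TOPval ℓ (A.run p.1 (fun i => v i p.2)) (fun i => v i p.2)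
        ∂((volume.restrict (Set.Icc (0 : ℝ) 1)).prod μ) ≤
      (1 - 1 / (Nat.factorial (2 * k + 2) : ℝ)) *
        ∫ ω, TOPval ℓ Finset.univ (fun i => v i ω) ∂μ := by
  have hv : IsHardInstance μ k v := ⟨hmeas, hlaw, hzero⟩
  have : IsProbabilityMeasure (volume.restrict (Set.Icc (0 : ℝ) 1)) := ⟨by simp⟩
  let last : Fin n := ⟨k, hn⟩
  let seeds (i : Fin n) := {u | (i : ℕ) < k + 1 ∧ i ∉ A.run u (hardInput k last)}
  have hseeds i : MeasurableSet (seeds i) :=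
    (MeasurableSet.const _).inter (A.measurableSet_mem_run i _).compl
  let S := ⋃ i, seeds i ×ˢ {ω | (fun j => v j ω) = hardInput k i}
  have hS : MeasurableSet S := .iUnion fun i => (hseeds i).prod (hv.measurableSet_eq _)
  have hloss : ∀ p ∈ S, TOPval ℓ (A.run p.1 (fun i => v i p.2)) (fun i => v i p.2) + 1 ≤
      TOPval ℓ univ (fun i => v i p.2) := by
    rintro ⟨u, ω⟩ hp
    obtain ⟨i, ⟨hi, hiu⟩, hω : (fun j => v j ω) = hardInput k i⟩ := Set.mem_iUnion.1 hp
    rw [hω]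
    exact TOPval_run_hardInput_add_one_le A hℓ (Fin.le_iff_val_le_val.2 (Nat.lt_succ_iff.1 hi))
      hi hiu
  have hmass : ENNReal.ofReal (2 ^ (k + 1) / (2 * k + 2)!) ≤
      ((volume.restrict (Set.Icc (0 : ℝ) 1)).prod μ) S :=
    le_prod_iUnion_prod hseeds (fun i => hv.measurableSet_eq _) fun u => by
      obtain ⟨i, hi, hiu⟩ := Fin.exists_lt_notMem_of_card_le hn (A.card_le u (hardInput k last))
      exact ⟨i, ⟨hi, hiu⟩, hv.le_measure_eq_hardInput hindep hn hi⟩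
  have hint := integral_add_measureReal_le (μ := (volume.restrict (Set.Icc (0 : ℝ) 1)).prod μ) hS
    (ae_of_all _ fun _ => TOPval.nonneg _ _) ((hv.integrable_TOPval ℓ).comp_snd _)
    (fun _ => TOPval.mono _ (subset_univ _)) hloss
  rw [integral_fun_snd (fun ω => TOPval ℓ univ fun j => v j ω), probReal_univ, one_smul] at hint
  refine le_one_sub_one_div_mul hint ?_ (by positivity)
  calc ∫ ω, TOPval ℓ univ (fun i => v i ω) ∂μ ≤ k + 1 := hv.integral_TOPval_le ℓ
    _ ≤ 2 ^ (k + 1) := by exact_mod_cast (Nat.lt_two_pow_self (n := k + 1)).le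
    _ ≤ _ := by
      rw [← div_le_iff₀' (by positivity)]
      exact (ENNReal.ofReal_le_iff_le_toReal (measure_ne_top _ _)).1 hmass

/-- **Prophet impossibility with full distributional knowledge (Theorem 2.6 of
Ezra–Feldman–Nehama).**  Let `1 ≤ ℓ ≤ k` and `n ≥ k + 1`.  Let `v₁,…,vₙ` be independent,
where for `1 ≤ i ≤ k+1` the variable `vᵢ` takes value `xᵢ = i(2k−i+3)/2` with probability
`1/xᵢ` and `0` otherwise, and `vᵢ = 0` a.s. for `i > k+1`.  Then every randomized online
algorithm `A` with capacity `k` (with independent uniform seed `u`) satisfies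
`E[TOP_ℓ(A(u,v); v)] ≤ (1 − 1/(2k+2)!) · E[TOP_ℓ(v)]`. -/
theorem prophet_impossibility {Ω : Type*} [MeasurableSpace Ω] (μ : Measure Ω)
    [IsProbabilityMeasure μ]
    (n k ℓ : ℕ) (hℓ : 1 ≤ ℓ) (hℓk : ℓ ≤ k) (hn : k + 1 ≤ n)
    (v : Fin n → Ω → ℝ)
    (hmeas : ∀ i, Measurable (v i))
    (hindep : iIndepFun v μ)
    (hlaw : ∀ i : Fin n, (i : ℕ) < k + 1 →
      μ.map (v i) =
        ENNReal.ofReal (1 / hardValue k i) • Measure.dirac (hardValue k i) +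
          ENNReal.ofReal (1 - 1 / hardValue k i) • Measure.dirac (0 : ℝ))
    (hzero : ∀ i : Fin n, k + 1 ≤ (i : ℕ) → μ.map (v i) = Measure.dirac (0 : ℝ))
    (A : OnlineAlg n k) :
    ∫ p : ℝ × Ω, TOPval ℓ (A.run p.1 (fun i => v i p.2)) (fun i => v i p.2)
        ∂((volume.restrict (Set.Icc (0 : ℝ) 1)).prod μ) ≤
      (1 - 1 / (Nat.factorial (2 * k + 2) : ℝ)) *
        ∫ ω, TOPval ℓ Finset.univ (fun i => v i ω) ∂μ :=
  prophet_impossibility_general μ n k ℓ hℓ hn v hmeas hindep hlaw hzero A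
end

section
/- Let n ≥ 1 be an integer and let p_1,…,p_n ∈ [0,1]. Then Σ_{i=1}^n p_i/i ≥ ln( (n+1) / (n+1 − Σ_{i=1}^n p_i) ). -/
private lemma key_step (N S q : ℝ) (hN : 0 ≤ N) (hS0 : 0 ≤ S) (hSN : S ≤ N)
    (hq0 : 0 ≤ q) (hq1 : q ≤ 1) :
    Real.log ((N+2)/(N+2-S-q)) ≤ Real.log ((N+1)/(N+1-S)) + q/(N+1) := by
  have h1 : 0 < N+1-S := by linarith
  have h2 : 0 < N+2-S-q := by linarith
  have h3 : 0 < N+1 := by linarith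
  have h4 : 0 < N+2 := by linarith
  have hB : 0 < (N+1)*(N+2-S-q) := by positivity
  have hlog := Real.log_le_sub_one_of_pos
    (show 0 < ((N+2)*(N+1-S)) / ((N+1)*(N+2-S-q)) by positivity)
  rw [Real.log_div (by positivity) hB.ne', Real.log_mul h4.ne' h1.ne',
    Real.log_mul h3.ne' h2.ne'] at hlog
  rw [Real.log_div h4.ne' h2.ne', Real.log_div h3.ne' h1.ne']
  have hfrac : ((N+2)*(N+1-S)) / ((N+1)*(N+2-S-q)) - 1 ≤ q/(N+1) := by
    rw [div_sub_one hB.ne', div_le_div_iff₀ hB h3]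
    nlinarith [mul_nonneg (mul_nonneg h3.le (sub_nonneg.2 hq1)) (add_nonneg hq0 hS0)]
  linarith

private lemma aux_lemma (n : ℕ) (p : Fin n → ℝ)
    (hp : ∀ i, p i ∈ Set.Icc (0 : ℝ) 1) :
    Real.log (((n : ℝ) + 1) / ((n : ℝ) + 1 - ∑ i, p i)) ≤ ∑ i, p i / (((i : ℕ) : ℝ) + 1) := by
  induction n with
  | zero => simp
  | succ n ih =>
    have hp' : ∀ i : Fin n, p i.castSucc ∈ Set.Icc (0:ℝ) 1 := fun i => hp _
    have IH := ih (fun i => p i.castSucc) hp'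
    set S : ℝ := ∑ i : Fin n, p i.castSucc with hSdef
    have hS0 : 0 ≤ S := Finset.sum_nonneg fun i _ => (hp' i).1
    have hSN : S ≤ n := by
      calc S ≤ ∑ _i : Fin n, (1:ℝ) := Finset.sum_le_sum fun i _ => (hp' i).2
        _ = n := by simp
    have hq0 : 0 ≤ p (Fin.last n) := (hp _).1
    have hq1 : p (Fin.last n) ≤ 1 := (hp _).2
    rw [Fin.sum_univ_castSucc (f := p),
      Fin.sum_univ_castSucc (f := fun i : Fin (n+1) => p i / (((i:ℕ):ℝ)+1))]
    have hkey := key_step (n:ℝ) S (p (Fin.last n)) (Nat.cast_nonneg n) hS0 hSN hq0 hq1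
    push_cast
    simp only [Fin.val_last, Fin.coe_castSucc] at *
    calc Real.log ((↑n + 1 + 1) / (↑n + 1 + 1 - (S + p (Fin.last n))))
        ≤ Real.log ((↑n + 1) / (↑n + 1 - S)) + p (Fin.last n) / (↑n + 1) := by
          have : ((n:ℝ) + 1 + 1 - (S + p (Fin.last n))) = (n:ℝ) + 2 - S - p (Fin.last n) := by ring
          rw [this, show ((n:ℝ) + 1 + 1) = (n:ℝ)+2 by ring]
          exact hkey
      _ ≤ (∑ i : Fin n, p i.castSucc / (↑↑i + 1)) + p (Fin.last n) / (↑n + 1) := by linarith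

/-- **Analytic core of the secretary lower bound.**
For `p₁,…,pₙ ∈ [0,1]`, `∑ᵢ pᵢ/i ≥ ln((n+1)/(n+1 − ∑ᵢ pᵢ))`. -/
theorem sum_div_ge_log (n : ℕ) (hn : 1 ≤ n) (p : Fin n → ℝ)
    (hp : ∀ i, p i ∈ Set.Icc (0 : ℝ) 1) :
    Real.log (((n : ℝ) + 1) / ((n : ℝ) + 1 - ∑ i, p i)) ≤ ∑ i, p i / (((i : ℕ) : ℝ) + 1) := by
  exact aux_lemma n p hp
end

section
/- Let n ≥ 1 and k ≥ 0 be integers and let p_1,…,p_n ∈ [0,1] satisfy Σ_{i=1}^n p_i/i ≤ k. Then (1/n)·Σ_{i=1}^n p_i ≤ (1 + 1/n)·(1 − e^{−k}). -/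
/-!
Put `S = ∑ pᵢ` and `aⱼ = n + 1 - ∑_{i ≥ j} pᵢ`, so that `aⱼ ≥ j + 1`, `a₀ = n + 1 - S`, `aₙ = n + 1`
and `a_{j+1} = aⱼ + pⱼ`. Since `log x ≤ x - 1`, each step costs
`log (a_{j+1} / aⱼ) ≤ pⱼ / aⱼ ≤ pⱼ / (j + 1)`, so `log ((n + 1) / (n + 1 - S)) ≤ ∑ pⱼ / (j + 1) ≤ k`,
i.e. `S ≤ (n + 1) (1 - e^{-k})`.
-/

open Finset Real

theorem log_div_le_sum_sub_div (a : ℕ → ℝ) (n : ℕ) (ha : ∀ j ≤ n, 0 < a j) :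
    log (a n / a 0) ≤ ∑ j ∈ range n, (a (j + 1) - a j) / a j := by
  induction n with
  | zero => simp
  | succ n ih =>
    have h₀ := ha 0 (Nat.zero_le _)
    have hn := ha n n.le_succ
    have hn₁ := ha (n + 1) le_rfl
    have hstep : log (a (n + 1) / a n) ≤ (a (n + 1) - a n) / a n := by
      simpa [sub_div, div_self hn.ne'] using log_le_sub_one_of_pos (div_pos hn₁ hn)
    calc log (a (n + 1) / a 0) = log (a n / a 0) + log (a (n + 1) / a n) := by
          rw [← log_mul (div_pos hn h₀).ne' (div_pos hn₁ hn).ne']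
          field_simp
      _ ≤ _ := by
          rw [sum_range_succ]
          exact add_le_add (ih fun j hj => ha j (hj.trans n.le_succ)) hstep

theorem sum_le_mul_one_sub_exp_neg (q : ℕ → ℝ) (n : ℕ) (hq : ∀ i < n, q i ∈ Set.Icc (0 : ℝ) 1) :
    ∑ i ∈ range n, q i ≤ (n + 1) * (1 - exp (-∑ i ∈ range n, q i / (i + 1))) := by
  set a : ℕ → ℝ := fun j => n + 1 - ∑ i ∈ Ico j n, q i with ha
  have ha_ge : ∀ j ≤ n, (j : ℝ) + 1 ≤ a j := by
    intro j hj
    have : ∑ i ∈ Ico j n, q i ≤ n - j := by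
      calc ∑ i ∈ Ico j n, q i ≤ ∑ i ∈ Ico j n, (1 : ℝ) :=
            sum_le_sum fun i hi => (hq i (mem_Ico.1 hi).2).2
        _ = n - j := by simp [Nat.cast_sub hj]
    simp only [ha]
    linarith
  have ha_pos : ∀ j ≤ n, 0 < a j := fun j hj => by linarith [ha_ge j hj]
  have ha_succ : ∀ j < n, a (j + 1) - a j = q j := by
    intro j hj
    simp only [ha, sum_eq_sum_Ico_succ_bot hj]
    ring
  have hlog : log (a n / a 0) ≤ ∑ i ∈ range n, q i / (i + 1) := by
    refine (log_div_le_sum_sub_div a n ha_pos).trans (sum_le_sum fun j hj => ?_)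
    have hj := mem_range.1 hj
    rw [ha_succ j hj]
    exact div_le_div_of_nonneg_left (hq j hj).1 (by positivity) (ha_ge j hj.le)
  rw [log_le_iff_le_exp (div_pos (ha_pos n le_rfl) (ha_pos 0 n.zero_le)),
    div_le_iff₀ (ha_pos 0 n.zero_le), ← inv_mul_le_iff₀ (exp_pos _), ← exp_neg] at hlog
  have ha_n : a n = n + 1 := by simp [ha]
  have ha_0 : a 0 = n + 1 - ∑ i ∈ range n, q i := by simp only [ha, Nat.Ico_zero_eq_range]
  rw [ha_n, ha_0] at hlog
  linarith

theorem avg_p_le_of_sum_div_le_general (n k : ℕ) (p : Fin n → ℝ)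
    (hp : ∀ i, p i ∈ Set.Icc (0 : ℝ) 1)
    (hsum : ∑ i, p i / (((i : ℕ) : ℝ) + 1) ≤ (k : ℝ)) :
    (1 / (n : ℝ)) * ∑ i, p i ≤ (1 + 1 / (n : ℝ)) * (1 - Real.exp (-(k : ℝ))) := by
  set q : ℕ → ℝ := fun i => if h : i < n then p ⟨i, h⟩ else 0
  have hq : ∀ i < n, q i ∈ Set.Icc (0 : ℝ) 1 := fun i hi => by simpa [q, hi] using hp ⟨i, hi⟩
  have hsum_q : ∑ i ∈ range n, q i / (i + 1) ≤ k := by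
    rw [sum_fin_eq_sum_range] at hsum
    convert hsum using 2 with i hi
    simp [q, mem_range.1 hi]
  have h_one_sub_exp : 0 ≤ 1 - exp (-(k : ℝ)) := by simp
  calc (1 / (n : ℝ)) * ∑ i, p i
      ≤ (1 / n) * ((n + 1) * (1 - exp (-∑ i ∈ range n, q i / (i + 1)))) := by
        rw [sum_fin_eq_sum_range]
        gcongr
        exact sum_le_mul_one_sub_exp_neg q n hq
    _ ≤ (1 / n) * ((n + 1) * (1 - exp (-(k : ℝ)))) := by gcongr
    _ = ((n : ℝ) * (n : ℝ)⁻¹ + 1 / n) * (1 - exp (-(k : ℝ))) := by ring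
    -- `n * n⁻¹` is `0`, not `1`, when `n = 0`
    _ ≤ (1 + 1 / n) * (1 - exp (-(k : ℝ))) := by gcongr; exact mul_inv_le_one (a := (n : ℝ))

/-- **Analytic core of the secretary lower bound.**
For `p₁,…,pₙ ∈ [0,1]` with `∑ᵢ pᵢ/i ≤ k`, one has
`(1/n)·∑ᵢ pᵢ ≤ (1 + 1/n)·(1 − e^{−k})`. -/
theorem avg_p_le_of_sum_div_le (n k : ℕ) (hn : 1 ≤ n) (p : Fin n → ℝ)
    (hp : ∀ i, p i ∈ Set.Icc (0 : ℝ) 1)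
    (hsum : ∑ i, p i / (((i : ℕ) : ℝ) + 1) ≤ (k : ℝ)) :
    (1 / (n : ℝ)) * ∑ i, p i ≤ (1 + 1 / (n : ℝ)) * (1 - Real.exp (-(k : ℝ))) :=
  avg_p_le_of_sum_div_le_general n k p hp hsum
end

section
/- Fix integers 1 ≤ k and n ≥ 1. Let v : {1,…,n} → ℝ_{≥0} be injective, let σ be a uniformly random permutation of {1,…,n}, and let w_i = v(σ(i)) be the arrival sequence. Then for every randomized rank-based online algorithm that accepts at most k arrivals, the probability that the arrival carrying the maximum value max_i v(i) is accepted is at most (1 + 1/n)·(1 − e^{−k}). -/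
open MeasureTheory Finset

/-- A randomized rank-based online algorithm with capacity `k`: it receives a uniform random
seed `u ∈ [0,1]` and the arrival sequence `w`, outputs a set of at most `k` arrivals, its
decision about arrival `i` depends only on the seed and the relative order of `w₁,…,wᵢ`
(which also makes it online), and it is measurable in the seed. -/
structure RankAlg (n k : ℕ) where
  run : ℝ → (Fin n → ℝ) → Finset (Fin n)
  card_le : ∀ u w, (run u w).card ≤ k
  rankBased : ∀ u (w w' : Fin n → ℝ) (i : Fin n),
    (∀ j j' : Fin n, j ≤ i → j' ≤ i → (w j < w j' ↔ w' j < w' j')) →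
    (i ∈ run u w ↔ i ∈ run u w')
  meas : ∀ (i : Fin n) (w : Fin n → ℝ), MeasurableSet {u : ℝ | i ∈ run u w}

/-!
Fix the seed. Conditioned on the arrival at time `p` being the best so far, it carries the overall
maximum with probability `(p + 1) / n`, and whether it is accepted depends only on the relative
order of the first `p + 1` arrivals, which is independent of that event. Hence, with `x p` the
probability that `p` is a best-so-far arrival and is accepted, the maximum is accepted with
probability `∑ (p + 1) / n · x p`, where `(p + 1) x p ≤ 1` (a best-so-far arrival at `p` has
probability `1 / (p + 1)`) and `∑ x p ≤ k` (capacity). Weak LP duality with the multiplier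
`a = ⌈(n + 1) e^{-k}⌉ - 1` bounds this by `(1 + 1/n)(1 - e^{-k})`, using
`∑_{a ≤ j < n} 1 / (j + 1) ≥ log ((n + 1) / (a + 1))`.
-/

theorem Finset.exists_perm_strictMonoOn_image_eq {α : Type*} [LinearOrder α] [Fintype α]
    (s t : Finset α) (h : #s = #t) :
    ∃ ρ : Equiv.Perm α, StrictMonoOn ρ s ∧ s.image ρ = t := by
  let e : s ≃o t := (s.orderIsoOfFin h).symm.trans (t.orderIsoOfFin rfl)
  have hcompl : Fintype.card {x // x ∉ s} = Fintype.card {x // x ∉ t} := by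
    simp [Fintype.card_subtype_compl, h]
  let ρ : Equiv.Perm α := Equiv.subtypeCongr e.toEquiv (Fintype.equivOfCardEq hcompl)
  have hρ : ∀ x (hx : x ∈ s), ρ x = e ⟨x, hx⟩ := fun x hx => by
    simp [ρ, Equiv.subtypeCongr, Equiv.sumCompl, hx]
  refine ⟨ρ, fun x hx y hy hxy => ?_, ?_⟩
  · rw [hρ x hx, hρ y hy]
    exact e.strictMono hxy
  · refine eq_of_subset_of_card_le (fun y hy => ?_) ?_
    · obtain ⟨x, hx, rfl⟩ := mem_image.mp hy
      rw [hρ x hx]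
      exact (e ⟨x, hx⟩).2
    · rw [card_image_of_injective _ ρ.injective, h]

namespace Equiv.Perm
variable {α : Type*} [LinearOrder α] [Fintype α]

def IsPrefixMax (σ : Perm α) (p : α) : Prop := ∀ j ≤ p, σ j ≤ σ p

instance (σ : Perm α) (p : α) : Decidable (σ.IsPrefixMax p) :=
  inferInstanceAs (Decidable (∀ j ≤ p, σ j ≤ σ p))

variable [LocallyFiniteOrderBot α]

theorem card_Iic_mul_card_isPrefixMax_le (p : α) :
    #(Iic p) * #{σ : Perm α | σ.IsPrefixMax p} ≤ Fintype.card (Perm α) := by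
  have hswap : ∀ r ≤ p, ∀ j ≤ p, swap p r j ≤ p := by
    intro r hr j hj
    rcases eq_or_ne j p with rfl | hjp
    · simpa
    rcases eq_or_ne j r with rfl | hjr
    · simp
    · rwa [swap_apply_of_ne_of_ne hjp hjr]
  -- `σ ∘ swap p r` has its prefix maximum at `r`, which recovers `r`.
  have hmax : ∀ r ≤ p, ∀ σ : Perm α, σ.IsPrefixMax p →
      ∀ j ≤ p, σ (swap p r j) ≤ σ (swap p r r) := by
    intro r hr σ hσ j hj
    rw [swap_apply_right]
    exact hσ _ (hswap r hr j hj)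
  rw [← card_product, ← card_univ]
  refine card_le_card_of_injOn (fun rσ => rσ.2 * swap p rσ.1)
    (fun _ _ => mem_coe.2 (mem_univ _)) ?_
  rintro ⟨r₁, σ₁⟩ h₁ ⟨r₂, σ₂⟩ h₂ (heq : σ₁ * swap p r₁ = σ₂ * swap p r₂)
  simp only [coe_product, Set.mem_prod, coe_Iic, Set.mem_Iic, coe_filter, mem_univ, true_and,
    Set.mem_ofPred_eq] at h₁ h₂
  have hm₁ := hmax r₁ h₁.1 σ₁ h₁.2
  have hm₂ := hmax r₂ h₂.1 σ₂ h₂.2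
  simp only [← mul_apply, heq] at hm₁
  obtain rfl : r₁ = r₂ := (σ₂ * swap p r₂).injective <|
    le_antisymm (hm₂ r₁ h₁.1) (hm₁ r₂ h₂.1)
  rw [mul_right_cancel heq]

theorem card_mul_card_apply_eq_top_le (p m : α) (hm : IsTop m)
    (P : Perm α → Prop) [DecidablePred P]
    (hP : ∀ σ ρ : Perm α, StrictMonoOn ρ ((Iic p).image σ) → P σ → P (ρ * σ)) :
    Fintype.card α * #{σ : Perm α | σ p = m ∧ P σ} ≤
      #(Iic p) * #{σ : Perm α | σ.IsPrefixMax p ∧ P σ} := by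
  choose! ρ hρmono hρimage using Finset.exists_perm_strictMonoOn_image_eq (α := α)
  -- Injection `(c, τ) ↦ (σ, σ⁻¹ c)`: `σ` relabels the values of `τ` so that its prefix values
  -- `S` become `S` with `m` swapped for `c`, order-preservingly on `S`. The prefix keeps its
  -- relative order, so `σ` still satisfies `P` and has its prefix maximum at `p`; and `τ` is
  -- recovered from `σ` and `c` since the swap is an involution.
  set S : Perm α → Finset α := fun τ => (Iic p).image τ
  set T : α → Perm α → Finset α := fun c τ => (S τ).image (swap m c)
  set σ : α → Perm α → Perm α := fun c τ => ρ (S τ) (T c τ) * τ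
  have hcard : ∀ c τ, #(S τ) = #(T c τ) := fun c τ =>
    (card_image_of_injective _ (swap m c).injective).symm
  have himage : ∀ c τ, (Iic p).image (σ c τ) = T c τ := fun c τ => by
    rw [← hρimage _ _ (hcard c τ), image_image]
    rfl
  rw [← card_univ, ← card_product, mul_comm, ← card_product]
  refine card_le_card_of_injOn (fun cτ => (σ cτ.1 cτ.2, (σ cτ.1 cτ.2).symm cτ.1)) ?_ ?_
  · rintro ⟨c, τ⟩ hcτ
    simp only [coe_product, Set.mem_prod, coe_univ, Set.mem_univ, coe_filter, mem_univ,
      true_and, Set.mem_ofPred_eq] at hcτ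
    obtain ⟨hτp, hPτ⟩ := hcτ
    have hmS : m ∈ S τ := hτp ▸ mem_image_of_mem τ (mem_Iic.2 le_rfl)
    have hcT : c ∈ (Iic p).image (σ c τ) := by
      rw [himage]
      exact mem_image.2 ⟨m, hmS, swap_apply_left m c⟩
    obtain ⟨q, hq, hqc⟩ := mem_image.1 hcT
    simp only [coe_product, Set.mem_prod, coe_filter, mem_univ, true_and, Set.mem_ofPred_eq,
      coe_Iic, Set.mem_Iic]
    refine ⟨⟨fun j hj => ?_, hP _ _ (hρmono _ _ (hcard c τ)) hPτ⟩, ?_⟩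
    · exact (hρmono _ _ (hcard c τ)).monotoneOn (mem_image_of_mem τ (mem_Iic.2 hj))
        (mem_image_of_mem τ (mem_Iic.2 le_rfl)) (hτp ▸ hm (τ j))
    · rw [(σ c τ).symm_apply_eq.2 hqc.symm]
      exact mem_Iic.1 hq
  · rintro ⟨c₁, τ₁⟩ - ⟨c₂, τ₂⟩ - heq
    simp only [Prod.mk.injEq] at heq
    obtain ⟨hσ, hc⟩ := heq
    obtain rfl : c₁ = c₂ := by
      simpa [hσ] using congrArg (σ c₂ τ₂) hc
    have hT : T c₁ τ₁ = T c₁ τ₂ := by rw [← himage, ← himage, hσ]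
    have hS : S τ₁ = S τ₂ := image_injective (swap m c₁).injective hT
    simp only [σ, hS, hT] at hσ
    rw [mul_left_cancel hσ]

end Equiv.Perm

theorem Equiv.Perm.card_filter_symm_apply_mem_eq_sum {α : Type*} [Fintype α] [DecidableEq α]
    (R : Equiv.Perm α → Finset α) (m : α) :
    #{σ : Equiv.Perm α | σ.symm m ∈ R σ} =
      ∑ p, #{σ : Equiv.Perm α | σ p = m ∧ p ∈ R σ} := by
  rw [card_eq_sum_card_fiberwise (f := fun σ => σ.symm m) (t := univ) fun _ _ => mem_univ _]
  refine sum_congr rfl fun p _ => congrArg card ?_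
  ext σ
  simp only [mem_filter, mem_univ, true_and, Equiv.symm_apply_eq]
  constructor
  · rintro ⟨h, rfl⟩; exact ⟨rfl, by simpa using h⟩
  · rintro ⟨rfl, h⟩; exact ⟨by simpa using h, rfl⟩

theorem natCast_add_one_le_mul_exp_sum_Ico {a n : ℕ} (h : a ≤ n) :
    (n + 1 : ℝ) ≤ (a + 1) * Real.exp (∑ j ∈ Ico a n, 1 / (j + 1 : ℝ)) := by
  induction n, h using Nat.le_induction with
  | base => simp
  | succ n han ih =>
    have hstep : (n + 1 + 1 : ℝ) ≤ (n + 1) * Real.exp (1 / (n + 1)) := by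
      have := Real.add_one_le_exp (1 / (n + 1 : ℝ))
      calc (n + 1 + 1 : ℝ) = (n + 1) * (1 / (n + 1) + 1) := by field_simp; ring
        _ ≤ (n + 1) * Real.exp (1 / (n + 1)) := by gcongr
    rw [sum_Ico_succ_top han, Real.exp_add, ← mul_assoc]
    push_cast
    calc (n + 1 + 1 : ℝ) ≤ (n + 1) * Real.exp (1 / (n + 1)) := hstep
      _ ≤ _ := by gcongr

theorem sum_succ_mul_le_mul_sum_add_sum_Ico {n a : ℕ} (ha : a ≤ n) (g : Fin n → ℝ)
    (hg0 : ∀ i, 0 ≤ g i) (hg1 : ∀ i : Fin n, ((i : ℕ) + 1 : ℝ) * g i ≤ 1) :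
    ∑ i : Fin n, ((i : ℕ) + 1 : ℝ) * g i ≤
      a * ∑ i, g i + ∑ j ∈ Ico a n, (1 - a / (j + 1 : ℝ)) := by
  set c : ℕ → ℝ := fun j => if a ≤ j then 1 - a / (j + 1) else 0
  have hterm : ∀ i : Fin n, ((i : ℕ) + 1 : ℝ) * g i ≤ a * g i + c i := by
    intro i
    have hi : (0 : ℝ) < i + 1 := by positivity
    by_cases hai : a ≤ (i : ℕ)
    · have hai' : (a : ℝ) ≤ i := by exact_mod_cast hai
      have hcoef : 0 ≤ 1 - a / (i + 1 : ℝ) := by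
        rw [sub_nonneg, div_le_one hi]; linarith
      calc ((i : ℕ) + 1 : ℝ) * g i = a * g i + (1 - a / (i + 1)) * ((i + 1) * g i) := by
            field_simp; ring
        _ ≤ a * g i + c i := by
            simp only [c, if_pos hai]
            gcongr
            exact mul_le_of_le_one_right hcoef (hg1 i)
    · have hia : (i + 1 : ℝ) ≤ a := by exact_mod_cast Nat.lt_of_not_le hai
      simp only [c, if_neg hai, add_zero]
      exact mul_le_mul_of_nonneg_right hia (hg0 i)
  have hc : ∑ i : Fin n, c i = ∑ j ∈ Ico a n, (1 - a / (j + 1 : ℝ)) := by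
    rw [Fin.sum_univ_eq_sum_range c, ← sum_range_add_sum_Ico c ha]
    have h0 : ∑ j ∈ range a, c j = 0 := sum_eq_zero fun j hj => if_neg (by simpa using hj)
    rw [h0, zero_add]
    exact sum_congr rfl fun j hj => if_pos (mem_Ico.1 hj).1
  calc ∑ i : Fin n, ((i : ℕ) + 1 : ℝ) * g i ≤ ∑ i, (a * g i + c i) :=
        sum_le_sum fun i _ => hterm i
    _ = _ := by rw [sum_add_distrib, ← mul_sum, hc]

theorem sum_succ_mul_le_mul_one_sub_exp {n : ℕ} {K : ℝ} (hK : 0 ≤ K) (g : Fin n → ℝ)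
    (hg0 : ∀ i, 0 ≤ g i) (hg1 : ∀ i : Fin n, ((i : ℕ) + 1 : ℝ) * g i ≤ 1)
    (hsum : ∑ i, g i ≤ K) :
    ∑ i : Fin n, ((i : ℕ) + 1 : ℝ) * g i ≤ (n + 1) * (1 - Real.exp (-K)) := by
  set y := (n + 1 : ℝ) * Real.exp (-K)
  have hy : 0 < y := by positivity
  set a := ⌈y⌉₊ - 1
  have ha : (a + 1 : ℝ) = ⌈y⌉₊ := by
    have := Nat.ceil_pos.2 hy
    rw [← Nat.cast_add_one, Nat.sub_add_cancel this]
  have hya : y ≤ a + 1 := ha ▸ Nat.le_ceil y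
  have hay : a < y := by linarith [Nat.ceil_lt_add_one hy.le]
  have han : a ≤ n := by
    have : y ≤ n + 1 :=
      mul_le_of_le_one_right (by positivity) (Real.exp_le_one_iff.2 (by linarith))
    have : (⌈y⌉₊ : ℝ) ≤ n + 1 := by exact_mod_cast Nat.ceil_le.2 (by exact_mod_cast this)
    exact_mod_cast (show (a : ℝ) ≤ n by linarith)
  set H := ∑ j ∈ Ico a n, 1 / (j + 1 : ℝ)
  have hdual : ∑ i : Fin n, ((i : ℕ) + 1 : ℝ) * g i ≤ a * K + (n - a) - a * H := by
    refine (sum_succ_mul_le_mul_sum_add_sum_Ico han g hg0 hg1).trans ?_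
    rw [sum_sub_distrib, sum_const, Nat.card_Ico, nsmul_eq_mul, Nat.cast_sub han, mul_one]
    simp only [div_eq_mul_one_div (a : ℝ), ← mul_sum]
    have : (a : ℝ) * ∑ i, g i ≤ a * K := by gcongr
    linarith
  have hyt : y * (1 + (K - H)) ≤ a + 1 := calc
    y * (1 + (K - H)) ≤ y * Real.exp (K - H) := by gcongr; linarith [Real.add_one_le_exp (K - H)]
    _ = (n + 1) * Real.exp (-H) := by rw [mul_assoc, ← Real.exp_add]; ring_nf
    _ ≤ a + 1 := by
      rw [← mul_le_mul_iff_of_pos_right (Real.exp_pos H), mul_assoc, ← Real.exp_add,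
        neg_add_cancel, Real.exp_zero, mul_one]
      exact natCast_add_one_le_mul_exp_sum_Ico han
  -- `a (K - H) = (a / y) (y (K - H)) ≤ (a / y) (a + 1 - y) ≤ a + 1 - y`, as `0 ≤ a < y ≤ a + 1`
  have : (a : ℝ) * (K - H) ≤ a + 1 - y := by nlinarith
  linarith

namespace RankAlg

open Equiv

variable {n k : ℕ} (Alg : RankAlg n k)

/-- `σ.symm i` is the arrival time of the value `v i`. -/
noncomputable def acceptProb (u : ℝ) (v : Fin n → ℝ) (i : Fin n) : ℝ :=
  (n.factorial : ℝ)⁻¹ *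
    ∑ σ : Perm (Fin n), if σ.symm i ∈ Alg.run u (fun j => v (σ j)) then 1 else 0

theorem acceptProb_comp_perm (u : ℝ) (v : Fin n → ℝ) (i : Fin n) (τ : Perm (Fin n)) :
    Alg.acceptProb u (v ∘ τ) (τ.symm i) = Alg.acceptProb u v i := by
  unfold acceptProb
  congr 1
  exact Equiv.sum_comp (Equiv.mulLeft τ)
    fun σ => if σ.symm i ∈ Alg.run u (fun j => v (σ j)) then (1 : ℝ) else 0

theorem mem_run_mul_of_strictMonoOn {v : Fin n → ℝ} (hv : StrictMono v) (u : ℝ) (p : Fin n)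
    (σ ρ : Perm (Fin n)) (hρ : StrictMonoOn ρ ((Iic p).image σ))
    (hσ : p ∈ Alg.run u (fun i => v (σ i))) : p ∈ Alg.run u (fun i => v ((ρ * σ) i)) := by
  refine (Alg.rankBased u _ _ p fun j j' hj hj' => ?_).1 hσ
  rw [hv.lt_iff_lt, hv.lt_iff_lt, Perm.mul_apply, Perm.mul_apply,
    hρ.lt_iff_lt (mem_image_of_mem σ (mem_Iic.2 hj)) (mem_image_of_mem σ (mem_Iic.2 hj'))]

theorem sum_card_isPrefixMax_mem_run_le (u : ℝ) (v : Fin n → ℝ) :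
    ∑ p, #{σ : Perm (Fin n) | σ.IsPrefixMax p ∧ p ∈ Alg.run u (fun i => v (σ i))} ≤
      k * n.factorial := by
  calc ∑ p, #{σ : Perm (Fin n) | σ.IsPrefixMax p ∧ p ∈ Alg.run u (fun i => v (σ i))}
      ≤ ∑ p, #{σ : Perm (Fin n) | p ∈ Alg.run u (fun i => v (σ i))} :=
        sum_le_sum fun p _ => card_le_card (monotone_filter_right _ fun _ _ h => h.2)
    _ = ∑ σ : Perm (Fin n), #{p | p ∈ Alg.run u (fun i => v (σ i))} :=
        sum_card_bipartiteAbove_eq_sum_card_bipartiteBelow _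
    _ ≤ ∑ _σ : Perm (Fin n), k := sum_le_sum fun σ _ => by
        simpa using Alg.card_le u (fun i => v (σ i))
    _ = k * n.factorial := by simp [mul_comm, Fintype.card_perm]

theorem succ_mul_card_isPrefixMax_mem_run_le (u : ℝ) (v : Fin n → ℝ) (p : Fin n) :
    (p + 1) * #{σ : Perm (Fin n) | σ.IsPrefixMax p ∧ p ∈ Alg.run u (fun i => v (σ i))} ≤
      n.factorial := by
  have h := Equiv.Perm.card_Iic_mul_card_isPrefixMax_le p
  rw [Fin.card_Iic, Fintype.card_perm, Fintype.card_fin] at h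
  exact (Nat.mul_le_mul_left _ (card_le_card (monotone_filter_right _ fun _ _ h => h.1))).trans h

theorem mul_card_apply_eq_top_mem_run_le {v : Fin n → ℝ} (hv : StrictMono v) {istar : Fin n}
    (htop : IsTop istar) (u : ℝ) (p : Fin n) :
    n * #{σ : Perm (Fin n) | σ p = istar ∧ p ∈ Alg.run u (fun i => v (σ i))} ≤
      (p + 1) * #{σ : Perm (Fin n) | σ.IsPrefixMax p ∧ p ∈ Alg.run u (fun i => v (σ i))} := by
  have h := Equiv.Perm.card_mul_card_apply_eq_top_le p istar htop _
    (Alg.mem_run_mul_of_strictMonoOn hv u p)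
  rwa [Fintype.card_fin, Fin.card_Iic] at h

theorem acceptProb_le_of_strictMono {v : Fin n → ℝ} (hv : StrictMono v) {istar : Fin n}
    (htop : IsTop istar) (u : ℝ) :
    Alg.acceptProb u v istar ≤ (1 + 1 / (n : ℝ)) * (1 - Real.exp (-(k : ℝ))) := by
  have hn : (0 : ℝ) < n := by exact_mod_cast istar.pos
  have hfac : (0 : ℝ) < n.factorial := by exact_mod_cast n.factorial_pos
  set R : Perm (Fin n) → Finset (Fin n) := fun σ => Alg.run u (fun i => v (σ i))
  set A : Fin n → ℕ := fun p => #{σ : Perm (Fin n) | σ p = istar ∧ p ∈ R σ}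
  set B : Fin n → ℕ := fun p => #{σ : Perm (Fin n) | σ.IsPrefixMax p ∧ p ∈ R σ}
  have hB : ∀ p : Fin n, ((p : ℕ) + 1 : ℝ) * (B p / n.factorial) ≤ 1 := fun p => by
    rw [mul_div_assoc', div_le_one hfac]
    exact_mod_cast Alg.succ_mul_card_isPrefixMax_mem_run_le u v p
  have hBsum : ∑ p, (B p / n.factorial : ℝ) ≤ k := by
    rw [← sum_div, div_le_iff₀ hfac]
    exact_mod_cast Alg.sum_card_isPrefixMax_mem_run_le u v
  have hcount : ∑ σ, (if σ.symm istar ∈ R σ then (1 : ℝ) else 0) = ∑ p, (A p : ℝ) := by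
    rw [sum_boole, Equiv.Perm.card_filter_symm_apply_mem_eq_sum R istar, Nat.cast_sum]
  calc Alg.acceptProb u v istar = (n.factorial : ℝ)⁻¹ * ∑ p, (A p : ℝ) := by
        rw [acceptProb, ← hcount]
    _ ≤ (n.factorial : ℝ)⁻¹ * ∑ p : Fin n, ((p : ℕ) + 1 : ℝ) * B p / n := by
        gcongr with p
        rw [le_div_iff₀ hn, mul_comm]
        exact_mod_cast Alg.mul_card_apply_eq_top_mem_run_le hv htop u p
    _ = 1 / n * ∑ p : Fin n, ((p : ℕ) + 1 : ℝ) * (B p / n.factorial) := by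
        rw [mul_sum, mul_sum]
        refine sum_congr rfl fun p _ => ?_
        field_simp
    _ ≤ 1 / n * ((n + 1) * (1 - Real.exp (-(k : ℝ)))) := by
        gcongr
        exact sum_succ_mul_le_mul_one_sub_exp (Nat.cast_nonneg k) _ (fun p => by positivity) hB
          hBsum
    _ = (1 + 1 / (n : ℝ)) * (1 - Real.exp (-(k : ℝ))) := by field_simp

theorem acceptProb_le {v : Fin n → ℝ} (hv : Function.Injective v) {istar : Fin n}
    (hmax : ∀ j, v j ≤ v istar) (u : ℝ) :
    Alg.acceptProb u v istar ≤ (1 + 1 / (n : ℝ)) * (1 - Real.exp (-(k : ℝ))) := by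
  set τ := Tuple.sort v
  have hτ : StrictMono (v ∘ τ) :=
    (Tuple.monotone_sort v).strictMono_of_injective (hv.comp τ.injective)
  have htop : IsTop (τ.symm istar) := fun j => hτ.le_iff_le.1 <| by
    simpa only [Function.comp_apply, Equiv.apply_symm_apply] using hmax (τ j)
  rw [← Alg.acceptProb_comp_perm u v istar τ]
  exact Alg.acceptProb_le_of_strictMono hτ htop u

end RankAlg

theorem secretary_max_accept_prob_general (n k : ℕ)
    (Alg : RankAlg n k)
    (v : Fin n → ℝ) (hv : Function.Injective v)
    (istar : Fin n) (hmax : ∀ j, v j ≤ v istar) :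
    (∫ u in Set.Icc (0 : ℝ) 1, ((n.factorial : ℝ))⁻¹ *
        ∑ σ : Equiv.Perm (Fin n),
          (if σ.symm istar ∈ Alg.run u (fun i => v (σ i)) then (1 : ℝ) else 0)) ≤
      (1 + 1 / (n : ℝ)) * (1 - Real.exp (-(k : ℝ))) := by
  have hbound : ∀ u, ‖Alg.acceptProb u v istar‖ ≤
      (1 + 1 / (n : ℝ)) * (1 - Real.exp (-(k : ℝ))) := fun u => by
    rw [Real.norm_of_nonneg (by unfold RankAlg.acceptProb; positivity)]
    exact Alg.acceptProb_le hv hmax u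
  calc (∫ u in Set.Icc (0 : ℝ) 1, Alg.acceptProb u v istar)
      ≤ ‖∫ u in Set.Icc (0 : ℝ) 1, Alg.acceptProb u v istar‖ := Real.le_norm_self _
    _ ≤ _ := (norm_integral_le_of_norm_le_const (.of_forall hbound)).trans_eq (by simp)

/-- **Secretary upper bound (Lemma 3.5 of Ezra–Feldman–Nehama).**
For any injective nonnegative value vector arriving in uniformly random order, no randomized
rank-based online algorithm that accepts at most `k` arrivals accepts the arrival carrying
the maximum value with probability greater than `(1 + 1/n)·(1 − e^{−k})`. -/
theorem secretary_max_accept_prob (n k : ℕ) (hn : 1 ≤ n) (hk : 1 ≤ k)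
    (Alg : RankAlg n k)
    (v : Fin n → ℝ) (hv : Function.Injective v) (hvnn : ∀ i, 0 ≤ v i)
    (istar : Fin n) (hmax : ∀ j, v j ≤ v istar) :
    (∫ u in Set.Icc (0 : ℝ) 1, ((n.factorial : ℝ))⁻¹ *
        ∑ σ : Equiv.Perm (Fin n),
          (if σ.symm istar ∈ Alg.run u (fun i => v (σ i)) then (1 : ℝ) else 0)) ≤
      (1 + 1 / (n : ℝ)) * (1 - Real.exp (-(k : ℝ))) :=
  secretary_max_accept_prob_general n k Alg v hv istar hmax
end
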